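/- arXiv:2603.27009 — 5 statements merged into one kernel-verified Lean document; each statement's English description precedes it below -/
import Mathlib

section
/- The Hilbert distance on the interior of a bounded convex open set Ω in the plane, defined for distinct points p, q as (1/2)·log of the cross-ratio of the chord endpoints, is a metric: it is nonnegative, zero iff p = q, symmetric, and satisfies the triangle inequality. -/
noncomputable section
open Classical

abbrev V2 := EuclideanSpace ℝ (Fin 2)

/-- The Hilbert distance on `Ω`: for distinct `p q` with chord endpoints `x`
(beyond `p`) and `y` (beyond `q`) on the frontier of `Ω`, it is
`(1/2) * log ((‖x−q‖·‖y−p‖)/(‖x−p‖·‖y−q‖))`; otherwise `0`. -/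
noncomputable def hilbertDist (Ω : Set V2) (p q : V2) : ℝ :=
  if h : ∃ x y : V2, x ∈ frontier Ω ∧ y ∈ frontier Ω ∧
      p ∈ openSegment ℝ x q ∧ q ∈ openSegment ℝ p y then
    (1/2) * Real.log ((dist h.choose q * dist h.choose_spec.choose p) /
      (dist h.choose p * dist h.choose_spec.choose q))
  else 0

/-!
The Hilbert distance is the symmetrization `(F p q + F q p) / 2` of the Funk distance
`F p q = log (dist x q / dist x p)`, where `x` is the frontier point beyond `p` on the ray from
`q`. `F p q > 0` for `p ≠ q` because `p` lies strictly between `x` and `q`. For the triangle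
inequality `F p r ≤ F p q + F q r`, take a functional `f` supporting `Ω` at the endpoint `x` of
the chord through `p` and `r`: along any chord, the Funk ratio dominates the ratio of the gaps
`f x - f ·`, with equality on the chord through `x`, and the gap ratios telescope.
-/

open AffineMap

lemma dist_pos_of_mem_frontier_of_mem {α : Type*} [MetricSpace α] {s : Set α} {x y : α}
    (hs : IsOpen s) (hx : x ∈ frontier s) (hy : y ∈ s) : 0 < dist x y := by
  rw [dist_pos]
  rintro rfl
  exact hs.inter_frontier_eq.subset ⟨hy, hx⟩

section

variable {E : Type*} [NormedAddCommGroup E] [NormedSpace ℝ E] {Ω : Set E} {a b p q r x : E}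

lemma lineMap_mem_openSegment_lineMap (q p : E) {s t : ℝ} (hs : 0 < s) (hst : s < t) :
    lineMap q p s ∈ openSegment ℝ q (lineMap q p t) := by
  have ht := hs.trans hst
  rw [openSegment_eq_image_lineMap]
  refine ⟨s / t, ⟨div_pos hs ht, (div_lt_one ht).2 hst⟩, ?_⟩
  rw [lineMap_lineMap_right, div_mul_cancel₀ _ ht.ne']

lemma exists_eq_lineMap_of_mem_openSegment (h : p ∈ openSegment ℝ x q) :
    ∃ t : ℝ, 1 < t ∧ x = lineMap q p t := by
  rw [openSegment_symm, openSegment_eq_image_lineMap] at h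
  obtain ⟨s, ⟨hs0, hs1⟩, rfl⟩ := h
  exact ⟨s⁻¹, one_lt_inv₀ hs0 |>.2 hs1, by
    rw [lineMap_lineMap_right, inv_mul_cancel₀ hs0.ne', lineMap_apply_one]⟩

/-- A farther frontier point on the same ray would make the nearer one interior. -/
lemma eq_of_mem_frontier_of_mem_openSegment (hΩo : IsOpen Ω) (hΩc : Convex ℝ Ω) (hq : q ∈ Ω)
    {x' : E} (hx : x ∈ frontier Ω) (hx' : x' ∈ frontier Ω)
    (h : p ∈ openSegment ℝ x q) (h' : p ∈ openSegment ℝ x' q) : x = x' := by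
  have not_frontier : ∀ {s t : ℝ}, 1 < s → s < t → lineMap q p t ∈ frontier Ω →
      lineMap q p s ∉ frontier Ω := fun hs hst ht hs' =>
    hs'.2 <| hΩc.openSegment_interior_closure_subset_interior (by rwa [hΩo.interior_eq]) ht.1
      (lineMap_mem_openSegment_lineMap q p (one_pos.trans hs) hst)
  obtain ⟨t, ht, rfl⟩ := exists_eq_lineMap_of_mem_openSegment h
  obtain ⟨t', ht', rfl⟩ := exists_eq_lineMap_of_mem_openSegment h'
  rcases lt_trichotomy t t' with hlt | rfl | hgt
  · exact absurd hx (not_frontier ht hlt hx')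
  · rfl
  · exact absurd hx' (not_frontier ht' hgt hx)

/-- The ray from `q` through `p` is connected, meets `Ω` at `p` and leaves the bounded set `Ω`,
so it crosses `frontier Ω`, necessarily beyond `p`. -/
lemma exists_mem_frontier_mem_openSegment (hΩo : IsOpen Ω) (hΩb : Bornology.IsBounded Ω)
    (hp : p ∈ Ω) (hpq : p ≠ q) : ∃ x ∈ frontier Ω, p ∈ openSegment ℝ x q := by
  set ray := lineMap q p '' Set.Ici (1 : ℝ)
  have hray : IsPreconnected ray := isPreconnected_Ici.image _ lineMap_continuous.continuousOn
  have hp_ray : p ∈ ray ∩ Ω := ⟨⟨1, Set.mem_Ici.2 le_rfl, lineMap_apply_one q p⟩, hp⟩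
  have ray_not_subset : ¬ ray ⊆ Ω := by
    intro hsub
    obtain ⟨r, hr⟩ := (Metric.isBounded_iff_subset_closedBall q).1 hΩb
    have hqp : 0 < dist q p := dist_pos.2 hpq.symm
    set t := max 1 ((r + 1) / dist q p)
    have hfar := hr (hsub ⟨t, Set.mem_Ici.2 (le_max_left _ _), rfl⟩)
    rw [Metric.mem_closedBall, dist_lineMap_left, Real.norm_eq_abs,
      abs_of_pos (one_pos.trans_le (le_max_left _ _))] at hfar
    have := (div_le_iff₀ hqp).1 (le_max_right 1 ((r + 1) / dist q p))
    linarith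
  obtain ⟨_, ⟨t, ht, rfl⟩, hxΩ⟩ : (ray ∩ frontier Ω).Nonempty := by
    by_contra hempty
    refine ray_not_subset (hray.subset_of_closure_inter_subset hΩo ⟨p, hp_ray⟩ ?_)
    rintro z ⟨hzcl, hzray⟩
    by_contra hzΩ
    exact hempty ⟨z, hzray, by rw [hΩo.frontier_eq]; exact ⟨hzcl, hzΩ⟩⟩
  have ht1 : 1 < t := by
    refine ht.lt_of_ne' fun h1 => ?_
    rw [h1, lineMap_apply_one] at hxΩ
    exact hΩo.inter_frontier_eq.subset ⟨hp, hxΩ⟩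
  refine ⟨_, hxΩ, ?_⟩
  rw [openSegment_symm]
  simpa using lineMap_mem_openSegment_lineMap q p one_pos ht1


lemma sub_mul_dist_add_sub_mul_dist_of_mem_segment (f : E →L[ℝ] ℝ) (c : ℝ)
    (h : a ∈ segment ℝ x b) :
    (c - f b) * dist x a + (c - f x) * dist a b = (c - f a) * dist x b := by
  rw [segment_eq_image_lineMap] at h
  obtain ⟨t, ⟨ht0, ht1⟩, rfl⟩ := h
  have hf : f (lineMap x b t) = (1 - t) * f x + t * f b := by
    simp only [lineMap_apply_module, map_add, map_smul, smul_eq_mul]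
  rw [dist_left_lineMap, dist_lineMap_right, hf, Real.norm_eq_abs, Real.norm_eq_abs,
    abs_of_nonneg ht0, abs_of_nonneg (sub_nonneg.2 ht1)]
  ring

lemma sub_div_sub_le_dist_div_dist {f : E →L[ℝ] ℝ} {c : ℝ} (hΩo : IsOpen Ω)
    (hf : ∀ z ∈ Ω, f z < c) (hx : x ∈ frontier Ω) (ha : a ∈ Ω)
    (h : a ∈ openSegment ℝ x b) : (c - f b) / (c - f a) ≤ dist x b / dist x a := by
  have hfx : f x ≤ c :=
    closure_minimal (fun z hz => (hf z hz).le) (isClosed_le f.continuous continuous_const) hx.1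
  have key := sub_mul_dist_add_sub_mul_dist_of_mem_segment f c (openSegment_subset_segment _ _ _ h)
  rw [div_le_div_iff₀ (sub_pos.2 (hf a ha)) (dist_pos_of_mem_frontier_of_mem hΩo hx ha)]
  linarith [mul_nonneg (sub_nonneg.2 hfx) (dist_nonneg (x := a) (y := b))]

lemma sub_div_sub_eq_dist_div_dist {f : E →L[ℝ] ℝ} {c : ℝ} (hΩo : IsOpen Ω)
    (hf : ∀ z ∈ Ω, f z < c) (hfx : f x = c) (hx : x ∈ frontier Ω) (ha : a ∈ Ω)
    (h : a ∈ openSegment ℝ x b) : (c - f b) / (c - f a) = dist x b / dist x a := by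
  have key := sub_mul_dist_add_sub_mul_dist_of_mem_segment f c (openSegment_subset_segment _ _ _ h)
  rw [hfx, sub_self, zero_mul, add_zero] at key
  rw [div_eq_div_iff (sub_pos.2 (hf a ha)).ne' (dist_pos_of_mem_frontier_of_mem hΩo hx ha).ne']
  linarith

def funkDist (Ω : Set E) (p q : E) : ℝ :=
  if h : ∃ x ∈ frontier Ω, p ∈ openSegment ℝ x q then
    Real.log (dist h.choose q / dist h.choose p)
  else 0

lemma funkDist_self (hΩo : IsOpen Ω) (hp : p ∈ Ω) : funkDist Ω p p = 0 := by
  rw [funkDist, dif_neg]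
  rintro ⟨x, hx, hpx⟩
  rw [right_mem_openSegment_iff] at hpx
  exact hΩo.inter_frontier_eq.subset ⟨hp, hpx ▸ hx⟩

lemma funkDist_eq (hΩo : IsOpen Ω) (hΩc : Convex ℝ Ω) (hq : q ∈ Ω) (hx : x ∈ frontier Ω)
    (h : p ∈ openSegment ℝ x q) : funkDist Ω p q = Real.log (dist x q / dist x p) := by
  have hex : ∃ x ∈ frontier Ω, p ∈ openSegment ℝ x q := ⟨x, hx, h⟩
  rw [funkDist, dif_pos hex,
    eq_of_mem_frontier_of_mem_openSegment hΩo hΩc hq hex.choose_spec.1 hx hex.choose_spec.2 h]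

lemma funkDist_pos (hΩo : IsOpen Ω) (hΩb : Bornology.IsBounded Ω) (hΩc : Convex ℝ Ω)
    (hp : p ∈ Ω) (hq : q ∈ Ω) (hpq : p ≠ q) : 0 < funkDist Ω p q := by
  obtain ⟨x, hx, h⟩ := exists_mem_frontier_mem_openSegment hΩo hΩb hp hpq
  rw [funkDist_eq hΩo hΩc hq hx h]
  refine Real.log_pos ((one_lt_div (dist_pos_of_mem_frontier_of_mem hΩo hx hp)).2 ?_)
  rw [openSegment_eq_image_lineMap] at h
  obtain ⟨t, ⟨ht0, ht1⟩, rfl⟩ := h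
  have hxq := dist_pos_of_mem_frontier_of_mem hΩo hx hq
  rw [dist_left_lineMap, Real.norm_eq_abs, abs_of_pos ht0]
  exact mul_lt_of_lt_one_left hxq ht1

lemma funkDist_nonneg (hΩo : IsOpen Ω) (hΩb : Bornology.IsBounded Ω) (hΩc : Convex ℝ Ω)
    (hp : p ∈ Ω) (hq : q ∈ Ω) : 0 ≤ funkDist Ω p q := by
  rcases eq_or_ne p q with rfl | hpq
  · rw [funkDist_self hΩo hp]
  · exact (funkDist_pos hΩo hΩb hΩc hp hq hpq).le

lemma log_dist_div_dist_le_add (hΩo : IsOpen Ω) (hΩc : Convex ℝ Ω)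
    (hp : p ∈ Ω) (hq : q ∈ Ω) (hr : r ∈ Ω) {u v : E}
    (hx : x ∈ frontier Ω) (hpr : p ∈ openSegment ℝ x r)
    (hu : u ∈ frontier Ω) (hpq : p ∈ openSegment ℝ u q)
    (hv : v ∈ frontier Ω) (hqr : q ∈ openSegment ℝ v r) :
    Real.log (dist x r / dist x p) ≤
      Real.log (dist u q / dist u p) + Real.log (dist v r / dist v q) := by
  obtain ⟨f, hf⟩ := geometric_hahn_banach_open_point hΩc hΩo
    (fun hxΩ => hΩo.inter_frontier_eq.subset ⟨hxΩ, hx⟩)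
  have gap_pos : ∀ {z}, z ∈ Ω → 0 < f x - f z := fun hz => sub_pos.2 (hf _ hz)
  calc Real.log (dist x r / dist x p)
      = Real.log ((f x - f q) / (f x - f p)) + Real.log ((f x - f r) / (f x - f q)) := by
        rw [← Real.log_mul (div_pos (gap_pos hq) (gap_pos hp)).ne'
            (div_pos (gap_pos hr) (gap_pos hq)).ne',
          div_mul_div_cancel₀' (gap_pos hq).ne',
          sub_div_sub_eq_dist_div_dist hΩo hf rfl hx hp hpr]
    _ ≤ Real.log (dist u q / dist u p) + Real.log (dist v r / dist v q) := by
        gcongr ?_ + ?_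
        · exact Real.log_le_log (div_pos (gap_pos hq) (gap_pos hp))
            (sub_div_sub_le_dist_div_dist hΩo hf hu hp hpq)
        · exact Real.log_le_log (div_pos (gap_pos hr) (gap_pos hq))
            (sub_div_sub_le_dist_div_dist hΩo hf hv hq hqr)

lemma funkDist_triangle (hΩo : IsOpen Ω) (hΩb : Bornology.IsBounded Ω) (hΩc : Convex ℝ Ω)
    (hp : p ∈ Ω) (hq : q ∈ Ω) (hr : r ∈ Ω) :
    funkDist Ω p r ≤ funkDist Ω p q + funkDist Ω q r := by
  rcases eq_or_ne p q with rfl | hpq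
  · rw [funkDist_self hΩo hp, zero_add]
  rcases eq_or_ne q r with rfl | hqr
  · rw [funkDist_self hΩo hq, add_zero]
  rcases eq_or_ne p r with rfl | hpr
  · rw [funkDist_self hΩo hp]
    exact add_nonneg (funkDist_nonneg hΩo hΩb hΩc hp hq) (funkDist_nonneg hΩo hΩb hΩc hq hp)
  obtain ⟨x, hx, hxpr⟩ := exists_mem_frontier_mem_openSegment hΩo hΩb hp hpr
  obtain ⟨u, hu, hupq⟩ := exists_mem_frontier_mem_openSegment hΩo hΩb hp hpq
  obtain ⟨v, hv, hvqr⟩ := exists_mem_frontier_mem_openSegment hΩo hΩb hq hqr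
  rw [funkDist_eq hΩo hΩc hr hx hxpr, funkDist_eq hΩo hΩc hq hu hupq,
    funkDist_eq hΩo hΩc hr hv hvqr]
  exact log_dist_div_dist_le_add hΩo hΩc hp hq hr hx hxpr hu hupq hv hvqr

end

lemma hilbertDist_eq_funkDist {Ω : Set V2} (hΩo : IsOpen Ω) (hΩb : Bornology.IsBounded Ω)
    (hΩc : Convex ℝ Ω) {p q : V2} (hp : p ∈ Ω) (hq : q ∈ Ω) :
    hilbertDist Ω p q = (funkDist Ω p q + funkDist Ω q p) / 2 := by
  rw [hilbertDist]
  split_ifs with h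
  · obtain ⟨hx, hy, hpx, hqy⟩ := h.choose_spec.choose_spec
    rw [openSegment_symm] at hqy
    rw [funkDist_eq hΩo hΩc hq hx hpx, funkDist_eq hΩo hΩc hp hy hqy, mul_div_mul_comm,
      Real.log_mul (div_pos (dist_pos_of_mem_frontier_of_mem hΩo hx hq)
          (dist_pos_of_mem_frontier_of_mem hΩo hx hp)).ne'
        (div_pos (dist_pos_of_mem_frontier_of_mem hΩo hy hp)
          (dist_pos_of_mem_frontier_of_mem hΩo hy hq)).ne']
    ring
  · obtain rfl : p = q := by
      by_contra hpq
      obtain ⟨x, hx, hpx⟩ := exists_mem_frontier_mem_openSegment hΩo hΩb hp hpq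
      obtain ⟨y, hy, hqy⟩ := exists_mem_frontier_mem_openSegment hΩo hΩb hq (Ne.symm hpq)
      exact h ⟨x, y, hx, hy, hpx, by rwa [openSegment_symm]⟩
    rw [funkDist_self hΩo hp]
    norm_num

theorem hilbertDist_is_metric_general (Ω : Set V2) (hΩo : IsOpen Ω) (hΩb : Bornology.IsBounded Ω)
    (hΩc : Convex ℝ Ω) :
    (∀ p ∈ Ω, ∀ q ∈ Ω, 0 ≤ hilbertDist Ω p q) ∧
    (∀ p ∈ Ω, ∀ q ∈ Ω, (hilbertDist Ω p q = 0 ↔ p = q)) ∧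
    (∀ p ∈ Ω, ∀ q ∈ Ω, hilbertDist Ω p q = hilbertDist Ω q p) ∧
    (∀ p ∈ Ω, ∀ q ∈ Ω, ∀ r ∈ Ω,
      hilbertDist Ω p r ≤ hilbertDist Ω p q + hilbertDist Ω q r) := by
  have hilbert : ∀ {p q}, p ∈ Ω → q ∈ Ω →
      hilbertDist Ω p q = (funkDist Ω p q + funkDist Ω q p) / 2 :=
    hilbertDist_eq_funkDist hΩo hΩb hΩc
  have nonneg : ∀ {p q}, p ∈ Ω → q ∈ Ω → 0 ≤ funkDist Ω p q := funkDist_nonneg hΩo hΩb hΩc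
  refine ⟨fun p hp q hq => ?_, fun p hp q hq => ?_, fun p hp q hq => ?_, fun p hp q hq r hr => ?_⟩
  · rw [hilbert hp hq]
    linarith [nonneg hp hq, nonneg hq hp]
  · rw [hilbert hp hq]
    refine ⟨fun h => by_contra fun hpq => ?_, fun hpq => ?_⟩
    · linarith [funkDist_pos hΩo hΩb hΩc hp hq hpq, nonneg hq hp]
    · rw [hpq, funkDist_self hΩo hq]
      norm_num
  · rw [hilbert hp hq, hilbert hq hp, add_comm]
  · rw [hilbert hp hr, hilbert hp hq, hilbert hq hr]
    linarith [funkDist_triangle hΩo hΩb hΩc hp hq hr, funkDist_triangle hΩo hΩb hΩc hr hq hp]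

/-- The Hilbert distance on an open bounded convex set `Ω ⊂ ℝ²` is a metric. -/
theorem hilbertDist_is_metric (Ω : Set V2) (hΩo : IsOpen Ω) (hΩb : Bornology.IsBounded Ω)
    (hΩc : Convex ℝ Ω) (hne : Ω.Nonempty) :
    (∀ p ∈ Ω, ∀ q ∈ Ω, 0 ≤ hilbertDist Ω p q) ∧
    (∀ p ∈ Ω, ∀ q ∈ Ω, (hilbertDist Ω p q = 0 ↔ p = q)) ∧
    (∀ p ∈ Ω, ∀ q ∈ Ω, hilbertDist Ω p q = hilbertDist Ω q p) ∧
    (∀ p ∈ Ω, ∀ q ∈ Ω, ∀ r ∈ Ω,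
      hilbertDist Ω p r ≤ hilbertDist Ω p q + hilbertDist Ω q r) :=
  hilbertDist_is_metric_general Ω hΩo hΩb hΩc
end
end

section
/- Closed balls in the Hilbert metric on an open bounded convex set Ω are convex subsets of ℝ². -/
noncomputable section
open Classical

/-!
Translate `c` to the origin and let `μ` be the gauge of `-c +ᵥ Ω`. The chord through `c` and
`p ≠ c` leaves `Ω` at `c + μ (c - p)⁻¹ • (c - p)` and `c + μ (p - c)⁻¹ • (p - c)`, so the cross
ratio defining the distance is `(1 + μ (c - p)) / (1 - μ (p - c))`. Hence the ball of radius `r`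
is `Ω ∩ {p | μ (c - p) + e^{2r} μ (p - c) ≤ e^{2r} - 1}`, and gauges of convex sets are convex.
-/

open Set Pointwise

theorem convexOn_gauge {E : Type*} [AddCommGroup E] [Module ℝ E] {s : Set E}
    (hs : Convex ℝ s) (habs : Absorbent ℝ s) : ConvexOn ℝ univ (gauge s) := by
  refine ⟨convex_univ, fun u _ w _ a b ha hb _ => ?_⟩
  calc gauge s (a • u + b • w) ≤ gauge s (a • u) + gauge s (b • w) := gauge_add_le hs habs _ _
    _ = a • gauge s u + b • gauge s w := by
      rw [gauge_smul_of_nonneg ha, gauge_smul_of_nonneg hb]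

theorem mem_openSegment_iff_exists_one_lt {E : Type*} [AddCommGroup E] [Module ℝ E]
    {w x z : E} : x ∈ openSegment ℝ w z ↔ ∃ t : ℝ, 1 < t ∧ z = w + t • (x - w) := by
  constructor
  · rintro ⟨a, b, ha, hb, hab, rfl⟩
    obtain rfl : a = 1 - b := by linarith
    refine ⟨b⁻¹, (one_lt_inv₀ hb).2 (by linarith), ?_⟩
    match_scalars <;> field_simp
    ring
  · rintro ⟨t, ht, rfl⟩
    have ht₀ : 0 < t := by linarith
    refine ⟨1 - t⁻¹, t⁻¹, by simpa using inv_lt_one_of_one_lt₀ ht, by positivity, by ring, ?_⟩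
    match_scalars <;> field_simp
    ring

section Translate

variable {E : Type*} [TopologicalSpace E] [AddGroup E] [IsTopologicalAddGroup E] {Ω : Set E} {c : E}

theorem frontier_vadd_set : frontier (c +ᵥ Ω) = c +ᵥ frontier Ω :=
  ((Homeomorph.addLeft c).image_frontier Ω).symm

theorem IsOpen.neg_vadd_set_mem_nhds_zero (hΩo : IsOpen Ω) (hc : c ∈ Ω) :
    -c +ᵥ Ω ∈ nhds (0 : E) :=
  (hΩo.vadd (-c)).mem_nhds (mem_neg_vadd_set_iff.2 (by simpa using hc))

end Translate

section Gauge

variable {E : Type*} [NormedAddCommGroup E] [NormedSpace ℝ E] {Ω : Set E} {c : E}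

theorem gauge_neg_vadd_set_sub_lt_one_iff (hΩo : IsOpen Ω) (hΩc : Convex ℝ Ω) (hc : c ∈ Ω)
    {p : E} : gauge (-c +ᵥ Ω) (p - c) < 1 ↔ p ∈ Ω := by
  rw [gauge_lt_one_iff_mem_interior (hΩc.vadd _) (hΩo.neg_vadd_set_mem_nhds_zero hc),
    (hΩo.vadd _).interior_eq, mem_neg_vadd_set_iff, vadd_eq_add, add_sub_cancel]

theorem gauge_neg_vadd_set_pos (hΩo : IsOpen Ω) (hΩb : Bornology.IsBounded Ω) (hc : c ∈ Ω)
    {d : E} (hd : d ≠ 0) : 0 < gauge (-c +ᵥ Ω) d :=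
  (gauge_pos (absorbent_nhds_zero (hΩo.neg_vadd_set_mem_nhds_zero hc))
    ((NormedSpace.isVonNBounded_iff ℝ).2 (hΩb.vadd _))).2 hd

variable (hΩo : IsOpen Ω) (hΩb : Bornology.IsBounded Ω) (hΩc : Convex ℝ Ω) (hc : c ∈ Ω)
include hΩo hΩb hΩc hc

theorem add_smul_mem_frontier_iff {d : E} (hd : d ≠ 0) {t : ℝ} (ht : 0 ≤ t) :
    c + t • d ∈ frontier Ω ↔ t = (gauge (-c +ᵥ Ω) d)⁻¹ := by
  rw [← mul_eq_one_iff_eq_inv₀ (gauge_neg_vadd_set_pos hΩo hΩb hc hd).ne', ← smul_eq_mul,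
    ← gauge_smul_of_nonneg ht,
    gauge_eq_one_iff_mem_frontier (hΩc.vadd _) (hΩo.neg_vadd_set_mem_nhds_zero hc),
    frontier_vadd_set, mem_neg_vadd_set_iff, vadd_eq_add]

theorem mem_frontier_and_mem_openSegment_left_iff {p x : E} (hpc : p ≠ c) :
    x ∈ frontier Ω ∧ c ∈ openSegment ℝ x p ↔ x = c + (gauge (-c +ᵥ Ω) (c - p))⁻¹ • (c - p) := by
  have hcp : c - p ≠ 0 := sub_ne_zero.2 hpc.symm
  have hb := gauge_neg_vadd_set_pos hΩo hΩb hc hcp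
  rw [openSegment_symm, mem_openSegment_iff_exists_one_lt]
  constructor
  · rintro ⟨hx, t, ht, rfl⟩
    rw [show p + t • (c - p) = c + (t - 1) • (c - p) by module] at hx ⊢
    rw [← (add_smul_mem_frontier_iff hΩo hΩb hΩc hc hcp (by linarith)).1 hx]
  · rintro rfl
    refine ⟨(add_smul_mem_frontier_iff hΩo hΩb hΩc hc hcp (by positivity)).2 rfl,
      1 + (gauge (-c +ᵥ Ω) (c - p))⁻¹, by simpa using hb, by module⟩

theorem mem_frontier_and_mem_openSegment_right_iff {p y : E} (hp : p ∈ Ω) (hpc : p ≠ c) :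
    y ∈ frontier Ω ∧ p ∈ openSegment ℝ c y ↔ y = c + (gauge (-c +ᵥ Ω) (p - c))⁻¹ • (p - c) := by
  have hpc' : p - c ≠ 0 := sub_ne_zero.2 hpc
  have ha := gauge_neg_vadd_set_pos hΩo hΩb hc hpc'
  rw [mem_openSegment_iff_exists_one_lt]
  constructor
  · rintro ⟨hy, t, ht, rfl⟩
    rw [← (add_smul_mem_frontier_iff hΩo hΩb hΩc hc hpc' (by linarith)).1 hy]
  · rintro rfl
    refine ⟨(add_smul_mem_frontier_iff hΩo hΩb hΩc hc hpc' (by positivity)).2 rfl, _, ?_, rfl⟩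
    exact (one_lt_inv₀ ha).2 ((gauge_neg_vadd_set_sub_lt_one_iff hΩo hΩc hc).2 hp)

end Gauge

theorem half_log_div_le_iff {a b r : ℝ} (ha : a < 1) (hb : 0 ≤ b) :
    (1/2) * Real.log ((1 + b) / (1 - a)) ≤ r ↔ b + Real.exp (2 * r) * a ≤ Real.exp (2 * r) - 1 := by
  have h₁ : 0 < 1 - a := by linarith
  have h₂ : (1/2) * Real.log ((1 + b) / (1 - a)) ≤ r ↔ Real.log ((1 + b) / (1 - a)) ≤ 2 * r := by
    constructor <;> intro h <;> linarith
  rw [h₂, Real.log_le_iff_le_exp (by positivity), div_le_iff₀ h₁]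
  constructor <;> intro h <;> linarith

theorem hilbertDist_self {Ω : Set V2} {c : V2} (hc : c ∉ frontier Ω) : hilbertDist Ω c c = 0 := by
  rw [hilbertDist, dif_neg]
  rintro ⟨x, -, hx, -, hcx, -⟩
  rw [right_mem_openSegment_iff] at hcx
  exact hc (hcx ▸ hx)

theorem hilbertDist_eq_of_chord_endpoints {Ω : Set V2} {p q x₀ y₀ : V2}
    (hx₀ : ∀ x, x ∈ frontier Ω ∧ p ∈ openSegment ℝ x q ↔ x = x₀)
    (hy₀ : ∀ y, y ∈ frontier Ω ∧ q ∈ openSegment ℝ p y ↔ y = y₀) :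
    hilbertDist Ω p q = (1/2) * Real.log ((dist x₀ q * dist y₀ p) / (dist x₀ p * dist y₀ q)) := by
  have hE : ∃ x y : V2, x ∈ frontier Ω ∧ y ∈ frontier Ω ∧
      p ∈ openSegment ℝ x q ∧ q ∈ openSegment ℝ p y :=
    ⟨x₀, y₀, ((hx₀ x₀).2 rfl).1, ((hy₀ y₀).2 rfl).1, ((hx₀ x₀).2 rfl).2, ((hy₀ y₀).2 rfl).2⟩
  obtain ⟨hx, hy, hpx, hqy⟩ := hE.choose_spec.choose_spec
  rw [hilbertDist, dif_pos hE, (hy₀ _).1 ⟨hy, hqy⟩, (hx₀ _).1 ⟨hx, hpx⟩]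

theorem hilbertDist_eq_log_gauge {Ω : Set V2} {c p : V2} (hΩo : IsOpen Ω)
    (hΩb : Bornology.IsBounded Ω) (hΩc : Convex ℝ Ω) (hc : c ∈ Ω) (hp : p ∈ Ω) :
    hilbertDist Ω c p = (1/2) * Real.log
      ((1 + gauge (-c +ᵥ Ω) (c - p)) / (1 - gauge (-c +ᵥ Ω) (p - c))) := by
  rcases eq_or_ne p c with rfl | hpc
  · rw [hilbertDist_self (hΩo.frontier_eq ▸ fun h => h.2 hp)]
    simp
  rw [hilbertDist_eq_of_chord_endpoints
    (fun _ => mem_frontier_and_mem_openSegment_left_iff hΩo hΩb hΩc hc hpc)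
    (fun _ => mem_frontier_and_mem_openSegment_right_iff hΩo hΩb hΩc hc hp hpc)]
  set a := gauge (-c +ᵥ Ω) (p - c)
  set b := gauge (-c +ᵥ Ω) (c - p)
  have ha : 0 < a := gauge_neg_vadd_set_pos hΩo hΩb hc (sub_ne_zero.2 hpc)
  have hb : 0 < b := gauge_neg_vadd_set_pos hΩo hΩb hc (sub_ne_zero.2 hpc.symm)
  have hn : ‖c - p‖ ≠ 0 := norm_ne_zero_iff.2 (sub_ne_zero.2 hpc.symm)
  have ha₁ : a < 1 := (gauge_neg_vadd_set_sub_lt_one_iff hΩo hΩc hc).2 hp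
  have hdist : ∀ {u v : V2} {s : ℝ}, 0 ≤ s → u - v = s • (c - p) ∨ u - v = s • (p - c) →
      dist u v = s * ‖c - p‖ := by
    rintro u v s hs (h | h) <;>
      simp [dist_eq_norm, h, norm_smul, abs_of_nonneg hs, norm_sub_rev p c]
  rw [hdist (s := b⁻¹ + 1) (by positivity) (.inl (by module)),
    hdist (s := a⁻¹) (by positivity) (.inr (by module)),
    hdist (s := b⁻¹) (by positivity) (.inl (by module)),
    hdist (s := a⁻¹ - 1) (by linarith [(one_lt_inv₀ ha).2 ha₁]) (.inr (by module))]
  have : 1 - a ≠ 0 := by linarith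
  congr 2
  field_simp

theorem hilbert_closedBall_convex_general (Ω : Set V2) (hΩo : IsOpen Ω)
    (hΩb : Bornology.IsBounded Ω) (hΩc : Convex ℝ Ω)
    (c : V2) (hc : c ∈ Ω) (r : ℝ) :
    Convex ℝ {p ∈ Ω | hilbertDist Ω c p ≤ r} := by
  set μ := gauge (-c +ᵥ Ω)
  have hμ : ConvexOn ℝ univ μ :=
    convexOn_gauge (hΩc.vadd _) (absorbent_nhds_zero (hΩo.neg_vadd_set_mem_nhds_zero hc))
  have hf : ConvexOn ℝ univ fun p => μ (c - p) + Real.exp (2 * r) * μ (p - c) :=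
    (hμ.comp_affineMap (AffineEquiv.constVSub ℝ c).toAffineMap).add
      ((hμ.comp_affineMap (AffineEquiv.vaddConst ℝ c).symm.toAffineMap).smul (Real.exp_pos _).le)
  have hball : {p ∈ Ω | hilbertDist Ω c p ≤ r} =
      Ω ∩ {p | p ∈ univ ∧ μ (c - p) + Real.exp (2 * r) * μ (p - c) ≤ Real.exp (2 * r) - 1} := by
    ext p
    refine and_congr_right fun hp => ?_
    rw [hilbertDist_eq_log_gauge hΩo hΩb hΩc hc hp,
      half_log_div_le_iff ((gauge_neg_vadd_set_sub_lt_one_iff hΩo hΩc hc).2 hp) (gauge_nonneg _)]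
    simp [μ]
  rw [hball]
  exact hΩc.inter (hf.convex_le _)

/-- Closed Hilbert balls are convex subsets of the plane. -/
theorem hilbert_closedBall_convex (Ω : Set V2) (hΩo : IsOpen Ω)
    (hΩb : Bornology.IsBounded Ω) (hΩc : Convex ℝ Ω)
    (c : V2) (hc : c ∈ Ω) (r : ℝ) (hr : 0 ≤ r) :
    Convex ℝ {p ∈ Ω | hilbertDist Ω c p ≤ r} :=
  hilbert_closedBall_convex_general Ω hΩo hΩb hΩc c hc r
end
end

section
/- If p is a point in Ω and (pₙ) is a sequence in Ω converging (in the Euclidean sense) to a boundary point of Ω, then d_Ω(p, pₙ) → ∞; that is, the Hilbert metric is unbounded near the boundary. -/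
noncomputable section
open Classical

/-!
If `q` lies on a chord `x p q y` of `Ω`, the cross ratio defining `d_Ω(p, q)` is at least
`|pq| / |qy|`. Since `Ω` is convex and `p` is interior, the homothety of ratio `1 + δ` centred at
`p` maps the frontier point `b` out of `closure Ω`, hence also every `q` close to `b`; as the
segment from `q` to `y` lies in `Ω`, this forces `|qy| ≤ δ |pq|`. Thus
`d_Ω(p, q) ≥ log (1/δ) / 2` for all `q` close enough to `b`, and `δ > 0` is arbitrary.
-/

open Set Filter Topology AffineMap

section

variable {E : Type*} [NormedAddCommGroup E] [NormedSpace ℝ E] {s : Set E}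

theorem IsOpen.exists_mem_frontier_mem_openSegment (hso : IsOpen s) (hsb : Bornology.IsBounded s)
    {a c : E} (ha : a ∈ s) (hca : c ≠ a) : ∃ y ∈ frontier s, a ∈ openSegment ℝ c y := by
  obtain ⟨R, hR⟩ := hsb.subset_closedBall c
  have hca' : 0 < dist c a := dist_pos.2 hca
  set T := max 1 ((R + 1) / dist c a)
  have hT : lineMap c a T ∉ s := fun h => by
    have hRT := hR h
    rw [Metric.mem_closedBall, dist_lineMap_left, Real.norm_eq_abs,
      abs_of_pos (by positivity)] at hRT
    have := (div_le_iff₀ hca').1 (le_max_right 1 ((R + 1) / dist c a))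
    linarith
  by_contra! hnone
  have hK : IsPreconnected (lineMap c a '' Icc (1 : ℝ) T) :=
    isPreconnected_Icc.image _ lineMap_continuous.continuousOn
  refine hT <| hK.subset_of_closure_inter_subset hso
    ⟨a, ⟨1, ⟨le_rfl, le_max_left _ _⟩, lineMap_apply_one _ _⟩, ha⟩ ?_
    ⟨T, ⟨le_max_left _ _, le_rfl⟩, rfl⟩
  rintro _ ⟨hcl, t, ht, rfl⟩
  by_contra hts
  rcases ht.1.eq_or_lt with rfl | ht1
  · exact hts (by rwa [lineMap_apply_one])
  · refine hnone _ (by rw [hso.frontier_eq]; exact ⟨hcl, hts⟩) ?_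
    rw [openSegment_eq_image_lineMap]
    exact ⟨t⁻¹, ⟨by positivity, inv_lt_one_of_one_lt₀ ht1⟩, by
      rw [lineMap_lineMap_right, inv_mul_cancel₀ (by positivity), lineMap_apply_one]⟩

theorem Convex.add_smul_mem_interior_of_add_mem_closure (hs : Convex ℝ s) {p v : E}
    (hp : p ∈ interior s) (hv : p + v ∈ closure s) {t : ℝ} (ht : t ∈ Ico 0 1) :
    p + t • v ∈ interior s := by
  convert hs.combo_interior_closure_mem_interior hp hv (sub_pos.2 ht.2) ht.1 (sub_add_cancel 1 t)
    using 1
  module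

theorem Convex.add_smul_sub_notMem_closure_of_mem_frontier (hs : Convex ℝ s) {p b : E}
    (hp : p ∈ interior s) (hb : b ∈ frontier s) {r : ℝ} (hr : 1 < r) :
    p + r • (b - p) ∉ closure s := fun h => by
  have := hs.add_smul_mem_interior_of_add_mem_closure hp h
    ⟨inv_nonneg.2 (by linarith), inv_lt_one_of_one_lt₀ hr⟩
  rw [smul_smul, inv_mul_cancel₀ (by positivity), one_smul, add_sub_cancel] at this
  exact hb.2 this

theorem Convex.dist_le_mul_dist_of_mem_openSegment (hs : Convex ℝ s) {p q y : E}
    (hp : p ∈ interior s) (hy : y ∈ closure s) (hq : q ∈ openSegment ℝ p y) {δ : ℝ}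
    (hδ : 0 ≤ δ) (hw : p + (1 + δ) • (q - p) ∉ interior s) : dist y q ≤ δ * dist p q := by
  rw [openSegment_eq_image_lineMap] at hq
  obtain ⟨β, ⟨hβ0, hβ1⟩, rfl⟩ := hq
  have hβδ : 1 ≤ (1 + δ) * β := by
    by_contra! h
    refine hw ?_
    rw [← vsub_eq_sub, lineMap_vsub_left, vsub_eq_sub, smul_smul]
    exact hs.add_smul_mem_interior_of_add_mem_closure hp (by rwa [add_sub_cancel])
      ⟨by positivity, h⟩
  rw [dist_comm, dist_lineMap_right, dist_left_lineMap, Real.norm_eq_abs, Real.norm_eq_abs,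
    abs_of_pos (sub_pos.2 hβ1), abs_of_pos hβ0, ← mul_assoc]
  exact mul_le_mul_of_nonneg_right (by linarith) dist_nonneg

theorem Convex.eventually_dist_le_mul_dist (hs : Convex ℝ s) {p b : E} (hp : p ∈ interior s)
    (hb : b ∈ frontier s) {δ : ℝ} (hδ : 0 < δ) :
    ∀ᶠ q in 𝓝 b, ∀ y ∈ closure s, q ∈ openSegment ℝ p y → dist y q ≤ δ * dist p q := by
  have hw : Continuous fun q : E => p + (1 + δ) • (q - p) := by fun_prop
  have hb' := hs.add_smul_sub_notMem_closure_of_mem_frontier hp hb (r := 1 + δ) (by linarith)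
  filter_upwards [hw.continuousAt.preimage_mem_nhds (isClosed_closure.isOpen_compl.mem_nhds hb')]
    with q hq y hy hqy
  exact hs.dist_le_mul_dist_of_mem_openSegment hp hy hqy hδ.le
    fun h => hq (interior_subset_closure h)

theorem div_dist_le_crossRatio {x p q y : E} (hpx : p ∈ openSegment ℝ x q)
    (hqy : q ∈ openSegment ℝ p y) (hpq : p ≠ q) :
    dist p q / dist y q ≤ dist x q * dist y p / (dist x p * dist y q) := by
  have hxp : 0 < dist x p := dist_pos.2 fun h => hpq (left_mem_openSegment_iff.1 (h ▸ hpx))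
  have hxq := dist_add_dist_of_mem_segment (openSegment_subset_segment ℝ _ _ hpx)
  have hpy := dist_add_dist_of_mem_segment (openSegment_subset_segment ℝ _ _ hqy)
  rw [← mul_div_mul_left _ _ hxp.ne']
  gcongr
  · linarith [dist_nonneg (x := p) (y := q)]
  · rw [dist_comm y p]; linarith [dist_nonneg (x := q) (y := y)]

end

theorem le_hilbertDist {Ω : Set V2} (hΩo : IsOpen Ω) (hΩb : Bornology.IsBounded Ω) {p q : V2}
    (hp : p ∈ Ω) (hq : q ∈ Ω) (hpq : p ≠ q) {δ : ℝ} (hδ : 0 < δ)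
    (hshort : ∀ y ∈ frontier Ω, q ∈ openSegment ℝ p y → dist y q ≤ δ * dist p q) :
    Real.log δ⁻¹ / 2 ≤ hilbertDist Ω p q := by
  have hchord : ∃ x y : V2, x ∈ frontier Ω ∧ y ∈ frontier Ω ∧
      p ∈ openSegment ℝ x q ∧ q ∈ openSegment ℝ p y := by
    obtain ⟨x, hx, hpx⟩ := hΩo.exists_mem_frontier_mem_openSegment hΩb hp hpq.symm
    obtain ⟨y, hy, hqy⟩ := hΩo.exists_mem_frontier_mem_openSegment hΩb hq hpq
    exact ⟨x, y, hx, hy, openSegment_symm ℝ q x ▸ hpx, hqy⟩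
  rw [hilbertDist, dif_pos hchord]
  obtain ⟨-, hy, hpx, hqy⟩ := hchord.choose_spec.choose_spec
  set x₀ := hchord.choose
  set y₀ := hchord.choose_spec.choose
  have hyq : 0 < dist y₀ q := dist_pos.2 fun h => hpq (right_mem_openSegment_iff.1 (h ▸ hqy))
  calc Real.log δ⁻¹ / 2 ≤ Real.log (dist p q / dist y₀ q) / 2 := by
        gcongr
        rw [le_div_iff₀ hyq, inv_mul_le_iff₀ hδ]
        exact hshort _ hy hqy
    _ ≤ Real.log (dist x₀ q * dist y₀ p / (dist x₀ p * dist y₀ q)) / 2 := by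
        gcongr ?_ / 2
        exact Real.log_le_log (div_pos (dist_pos.2 hpq) hyq)
          (div_dist_le_crossRatio hpx hqy hpq)
    _ = _ := by ring

/-- The Hilbert metric blows up along sequences converging to a boundary point. -/
theorem hilbertDist_tendsto_atTop_of_tendsto_frontier (Ω : Set V2) (hΩo : IsOpen Ω)
    (hΩb : Bornology.IsBounded Ω) (hΩc : Convex ℝ Ω)
    (p : V2) (hp : p ∈ Ω) (u : ℕ → V2) (hu : ∀ n, u n ∈ Ω)
    (b : V2) (hb : b ∈ frontier Ω) (hlim : Filter.Tendsto u Filter.atTop (nhds b)) :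
    Filter.Tendsto (fun n => hilbertDist Ω p (u n)) Filter.atTop Filter.atTop := by
  have hp' : p ∈ interior Ω := hΩo.interior_eq.symm ▸ hp
  rw [tendsto_atTop]
  intro M
  have hshort := hΩc.eventually_dist_le_mul_dist hp' hb (Real.exp_pos (-2 * M))
  have hne := (disjoint_interior_frontier.ne_of_mem hp' hb).symm
  filter_upwards [hlim.eventually hshort, hlim.eventually_ne hne] with n hshort hne
  calc M = Real.log (Real.exp (-2 * M))⁻¹ / 2 := by rw [Real.log_inv, Real.log_exp]; ring
    _ ≤ hilbertDist Ω p (u n) := le_hilbertDist hΩo hΩb hp (hu n) hne.symm (Real.exp_pos _)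
        fun y hy => hshort y (frontier_subset_closure hy)
end
end

section
/- Let Ω be the open square (100,300)² with the Hilbert metric, and let the sites be s₁=(160, 284.9), s₂=(140,170), s₃=(130,165), s₄=(180,285). Then the second-order Voronoi cell of the pair {s₁, s₂} with respect to the Hilbert metric on Ω is not star-shaped: there is no point z in the cell such that for every point p in the cell the segment [z,p] lies in the cell. -/
noncomputable section
open Classical

def Pt (a b : ℝ) : V2 := (WithLp.equiv 2 (Fin 2 → ℝ)).symm ![a, b]

def gsq (v : V2) : ℝ := max |v 0 - 200| |v 1 - 200|

def Osq : Set V2 := {x | 100 < x 0 ∧ x 0 < 300 ∧ 100 < x 1 ∧ x 1 < 300}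

lemma comb_apply (p q : V2) (t : ℝ) (i : Fin 2) : (p + t•(q-p)) i = p i + t*(q i - p i) := by
  simp [PiLp.add_apply, PiLp.smul_apply, PiLp.sub_apply, smul_eq_mul]

lemma comb2_apply (s t : ℝ) (p q : V2) (i : Fin 2) : (s•p + t•q) i = s * p i + t * q i := by
  simp [PiLp.add_apply, PiLp.smul_apply, smul_eq_mul]

lemma mem_Osq {v : V2} : v ∈ Osq ↔ gsq v < 100 := by
  unfold Osq gsq
  rw [Set.mem_setOf_eq, max_lt_iff, abs_lt, abs_lt]
  constructor
  · rintro ⟨h1, h2, h3, h4⟩; exact ⟨⟨by linarith, by linarith⟩, ⟨by linarith, by linarith⟩⟩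
  · rintro ⟨⟨h1, h2⟩, h3, h4⟩; exact ⟨by linarith, by linarith, by linarith, by linarith⟩

lemma continuous_gsq : Continuous gsq := by unfold gsq; fun_prop

lemma isOpen_Osq : IsOpen Osq := by
  have h : Osq = gsq ⁻¹' (Set.Iio 100) := Set.ext fun v => mem_Osq
  rw [h]; exact isOpen_Iio.preimage continuous_gsq

lemma gsq_smul_line (v : V2) (t : ℝ) (ht : 0 ≤ t) :
    gsq (Pt 200 200 + t • (v - Pt 200 200)) = t * gsq v := by
  unfold gsq
  rw [comb_apply, comb_apply]
  show max |200 + t * (v 0 - 200) - 200| |200 + t * (v 1 - 200) - 200| = _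
  rw [show (200:ℝ) + t * (v 0 - 200) - 200 = t * (v 0 - 200) by ring,
      show (200:ℝ) + t * (v 1 - 200) - 200 = t * (v 1 - 200) by ring,
      abs_mul, abs_mul, abs_of_nonneg ht, ← mul_max_of_nonneg _ _ ht]

lemma closure_Osq_sub : closure Osq ⊆ {v | gsq v ≤ 100} := by
  apply closure_minimal
  · intro v hv; exact le_of_lt (mem_Osq.mp hv)
  · have : {v : V2 | gsq v ≤ 100} = gsq ⁻¹' (Set.Iic 100) := rfl
    rw [this]; exact IsClosed.preimage continuous_gsq isClosed_Iic

lemma gsq_frontier {v : V2} (hv : v ∈ frontier Osq) : gsq v = 100 := by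
  have h1 : gsq v ≤ 100 := closure_Osq_sub hv.1
  have h2 : v ∉ Osq := by
    intro hmem
    exact hv.2 (by rwa [isOpen_Osq.interior_eq])
  rw [mem_Osq] at h2; linarith [not_lt.mp h2]

lemma mem_frontier_Osq {v : V2} (hv : gsq v = 100) : v ∈ frontier Osq := by
  constructor
  · -- v ∈ closure Osq
    have hcont : Continuous (fun t : ℝ => Pt 200 200 + t • (v - Pt 200 200)) := by fun_prop
    have htends : Filter.Tendsto (fun t : ℝ => Pt 200 200 + t • (v - Pt 200 200))
        (nhdsWithin 1 (Set.Iio 1)) (nhds v) := by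
      have := hcont.tendsto 1
      have h1 : Pt 200 200 + (1:ℝ) • (v - Pt 200 200) = v := by simp
      rw [h1] at this
      exact this.mono_left nhdsWithin_le_nhds
    refine mem_closure_of_tendsto htends ?_
    filter_upwards [Ioo_mem_nhdsLT_of_mem (show (1:ℝ) ∈ Set.Ioc 0 1 by norm_num)] with t ht
    rw [mem_Osq, gsq_smul_line v t (le_of_lt ht.1), hv]
    nlinarith [ht.2]
  · rw [isOpen_Osq.interior_eq, mem_Osq]; intro h; rw [hv] at h; linarith

lemma gsq_comb (q x : V2) (μ : ℝ) (h0 : 0 < μ) (h1 : μ < 1)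
    (hq : gsq q < 100) (hx : gsq x = 100) : gsq ((1-μ)•q + μ•x) < 100 := by
  have e0 : ((1-μ)•q + μ•x) 0 = (1-μ) * q 0 + μ * x 0 := comb2_apply _ _ _ _ _
  have e1 : ((1-μ)•q + μ•x) 1 = (1-μ) * q 1 + μ * x 1 := comb2_apply _ _ _ _ _
  have hq0 : |q 0 - 200| ≤ gsq q := le_max_left _ _
  have hq1 : |q 1 - 200| ≤ gsq q := le_max_right _ _
  have hx0 : |x 0 - 200| ≤ 100 := hx ▸ le_max_left _ _
  have hx1 : |x 1 - 200| ≤ 100 := hx ▸ le_max_right _ _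
  unfold gsq
  rw [e0, e1, max_lt_iff]
  constructor
  · calc |(1-μ) * q 0 + μ * x 0 - 200| = |(1-μ)*(q 0 - 200) + μ*(x 0 - 200)| := by ring_nf
      _ ≤ |(1-μ)*(q 0 - 200)| + |μ*(x 0 - 200)| := abs_add_le _ _
      _ = (1-μ)*|q 0 - 200| + μ*|x 0 - 200| := by
          rw [abs_mul, abs_mul, abs_of_nonneg (by linarith : (0:ℝ) ≤ 1-μ), abs_of_nonneg h0.le]
      _ < 100 := by nlinarith [abs_nonneg (q 0 - 200)]
  · calc |(1-μ) * q 1 + μ * x 1 - 200| = |(1-μ)*(q 1 - 200) + μ*(x 1 - 200)| := by ring_nf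
      _ ≤ |(1-μ)*(q 1 - 200)| + |μ*(x 1 - 200)| := abs_add_le _ _
      _ = (1-μ)*|q 1 - 200| + μ*|x 1 - 200| := by
          rw [abs_mul, abs_mul, abs_of_nonneg (by linarith : (0:ℝ) ≤ 1-μ), abs_of_nonneg h0.le]
      _ < 100 := by nlinarith [abs_nonneg (q 1 - 200)]

lemma smul_diff_of_openSegment {x q p : V2} {a b : ℝ} (ha : 0 < a) (hab : a + b = 1)
    (he : a•x + b•q = p) : a•(x - q) = p - q := by
  have hb : b = 1 - a := by linarith
  rw [smul_sub, ← he, hb, sub_smul, one_smul]; abel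

lemma beyond_unique {q p x x' : V2} (hq : gsq q < 100) (hx : gsq x = 100) (hx' : gsq x' = 100)
    (h : p ∈ openSegment ℝ x q) (h' : p ∈ openSegment ℝ x' q) : x = x' := by
  obtain ⟨a, b, ha, hb, hab, he⟩ := h
  obtain ⟨a', b', ha', hb', hab', he'⟩ := h'
  have k : a•(x - q) = p - q := smul_diff_of_openSegment ha hab he
  have k' : a'•(x' - q) = p - q := smul_diff_of_openSegment ha' hab' he'
  have key : a•(x - q) = a'•(x' - q) := by rw [k, k']
  rcases lt_trichotomy a a' with hlt | heq | hgt
  · exfalso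
    have hmu : (a/a')•(x - q) = x' - q := by
      rw [div_eq_mul_inv, mul_comm, mul_smul, key, smul_smul, inv_mul_cancel₀ (ne_of_gt ha'), one_smul]
    have hrw : x' = (1-(a/a'))•q + (a/a')•x := by
      have : x' = (a/a')•(x - q) + q := by rw [hmu]; abel
      rw [this, smul_sub, sub_smul, one_smul]; abel
    have := gsq_comb q x (a/a') (div_pos ha ha') ((div_lt_one ha').mpr hlt) hq hx
    rw [← hrw] at this; linarith [hx'.symm.le, this]
  · rw [heq] at key
    have := smul_right_injective V2 (ne_of_gt ha') key
    have hxx : x - q = x' - q := this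
    have := sub_left_injective.eq_iff.mp hxx
    exact this
  · exfalso
    have hmu : (a'/a)•(x' - q) = x - q := by
      rw [div_eq_mul_inv, mul_comm, mul_smul, ← key, smul_smul, inv_mul_cancel₀ (ne_of_gt ha), one_smul]
    have hrw : x = (1-(a'/a))•q + (a'/a)•x' := by
      have : x = (a'/a)•(x' - q) + q := by rw [hmu]; abel
      rw [this, smul_sub, sub_smul, one_smul]; abel
    have := gsq_comb q x' (a'/a) (div_pos ha' ha) ((div_lt_one ha).mpr hgt) hq hx'
    rw [← hrw] at this; linarith [hx.symm.le, this]

lemma hd_eval (p q : V2) (tx ty : ℝ) (htx : tx < 0) (hty : 1 < ty)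
    (hx : gsq (p + tx•(q-p)) = 100) (hy : gsq (p + ty•(q-p)) = 100)
    (hp : gsq p < 100) (hq : gsq q < 100) :
    hilbertDist Osq p q = (1/2) * Real.log (((1-tx)*ty)/((-tx)*(ty-1))) := by
  have hqp : q - p ≠ 0 := by
    intro h0
    rw [h0, smul_zero, add_zero] at hx
    linarith [hx ▸ hp]
  have hnorm : (0:ℝ) < ‖q - p‖ := norm_pos_iff.mpr hqp
  have h1tx : (0:ℝ) < 1 - tx := by linarith
  have hty0 : (0:ℝ) < ty := by linarith
  have hpx : p ∈ openSegment ℝ (p + tx•(q-p)) q := by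
    refine ⟨1/(1-tx), -tx/(1-tx), by positivity, div_pos (by linarith) h1tx, ?_, ?_⟩
    · rw [← add_div, div_eq_one_iff_eq (ne_of_gt h1tx)]; ring
    · match_scalars <;> field_simp <;> ring
  have hqy : q ∈ openSegment ℝ p (p + ty•(q-p)) := by
    refine ⟨(ty-1)/ty, 1/ty, div_pos (by linarith) hty0, by positivity, ?_, ?_⟩
    · rw [← add_div, div_eq_one_iff_eq (ne_of_gt hty0)]; ring
    · match_scalars <;> field_simp <;> ring
  have hex : ∃ x y : V2, x ∈ frontier Osq ∧ y ∈ frontier Osq ∧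
      p ∈ openSegment ℝ x q ∧ q ∈ openSegment ℝ p y :=
    ⟨_, _, mem_frontier_Osq hx, mem_frontier_Osq hy, hpx, hqy⟩
  unfold hilbertDist
  rw [dif_pos hex]
  obtain ⟨hf1, hf2, hm1, hm2⟩ := hex.choose_spec.choose_spec
  have ex : hex.choose = p + tx•(q-p) :=
    beyond_unique hq (gsq_frontier hf1) hx hm1 hpx
  have ey : hex.choose_spec.choose = p + ty•(q-p) := by
    have hm2' : q ∈ openSegment ℝ hex.choose_spec.choose p := by
      rw [openSegment_symm]; exact hm2
    have hqy' : q ∈ openSegment ℝ (p + ty•(q-p)) p := by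
      rw [openSegment_symm]; exact hqy
    exact beyond_unique hp (gsq_frontier hf2) hy hm2' hqy'
  have d1 : dist (p + tx•(q-p)) q = (1-tx) * ‖q-p‖ := by
    rw [dist_eq_norm, show p + tx•(q-p) - q = (tx-1)•(q-p) by
      rw [sub_smul, one_smul]; abel, norm_smul, Real.norm_eq_abs,
      abs_of_neg (by linarith : tx-1 < 0)]
    ring
  have d2 : dist (p + tx•(q-p)) p = (-tx) * ‖q-p‖ := by
    rw [dist_eq_norm, show p + tx•(q-p) - p = tx•(q-p) by abel, norm_smul,
      Real.norm_eq_abs, abs_of_neg htx]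
  have d3 : dist (p + ty•(q-p)) p = ty * ‖q-p‖ := by
    rw [dist_eq_norm, show p + ty•(q-p) - p = ty•(q-p) by abel, norm_smul,
      Real.norm_eq_abs, abs_of_pos (by linarith : (0:ℝ) < ty)]
  have d4 : dist (p + ty•(q-p)) q = (ty-1) * ‖q-p‖ := by
    rw [dist_eq_norm, show p + ty•(q-p) - q = (ty-1)•(q-p) by
      rw [sub_smul, one_smul]; abel, norm_smul, Real.norm_eq_abs,
      abs_of_pos (by linarith : (0:ℝ) < ty-1)]
  have e1 : dist hex.choose q = (1-tx) * ‖q-p‖ := by rw [ex]; exact d1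
  have e2 : dist hex.choose p = (-tx) * ‖q-p‖ := by rw [ex]; exact d2
  have e3 : dist hex.choose_spec.choose p = ty * ‖q-p‖ := by rw [ey]; exact d3
  have e4 : dist hex.choose_spec.choose q = (ty-1) * ‖q-p‖ := by rw [ey]; exact d4
  have harg : ((1-tx)*‖q-p‖*(ty*‖q-p‖))/((-tx*‖q-p‖)*((ty-1)*‖q-p‖))
      = ((1-tx)*ty)/((-tx)*(ty-1)) := by
    rw [div_eq_div_iff
      (ne_of_gt (mul_pos (mul_pos (neg_pos.mpr htx) hnorm) (mul_pos (by linarith : (0:ℝ) < ty-1) hnorm)))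
      (ne_of_gt (mul_pos (neg_pos.mpr htx) (by linarith : (0:ℝ) < ty-1)))]
    ring
  rw [e1, e2, e3, e4, harg]

def S1 : V2 := Pt 160 284.9
def S2 : V2 := Pt 140 170
def S3 : V2 := Pt 130 165
def S4 : V2 := Pt 180 285

lemma gsq_eq100_h (v : V2) (h1 : |v 1 - 200| = 100) (h0 : |v 0 - 200| ≤ 100) : gsq v = 100 := by
  unfold gsq; rw [h1]; exact max_eq_right (h1 ▸ h0)

lemma gsq_eq100_v (v : V2) (h0 : |v 0 - 200| = 100) (h1 : |v 1 - 200| ≤ 100) : gsq v = 100 := by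
  unfold gsq; rw [h0]; exact max_eq_left (h0 ▸ h1)

lemma hx_bottom (p q : V2) (t : ℝ) (h1 : p 1 + t*(q 1 - p 1) = 100)
    (h0a : 100 ≤ p 0 + t*(q 0 - p 0)) (h0b : p 0 + t*(q 0 - p 0) ≤ 300) :
    gsq (p + t•(q-p)) = 100 := by
  apply gsq_eq100_h <;> rw [comb_apply]
  · rw [h1]; norm_num
  · rw [abs_le]; constructor <;> linarith

lemma hx_top (p q : V2) (t : ℝ) (h1 : p 1 + t*(q 1 - p 1) = 300)
    (h0a : 100 ≤ p 0 + t*(q 0 - p 0)) (h0b : p 0 + t*(q 0 - p 0) ≤ 300) :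
    gsq (p + t•(q-p)) = 100 := by
  apply gsq_eq100_h <;> rw [comb_apply]
  · rw [h1]; norm_num
  · rw [abs_le]; constructor <;> linarith

lemma hx_left (p q : V2) (t : ℝ) (h0 : p 0 + t*(q 0 - p 0) = 100)
    (h1a : 100 ≤ p 1 + t*(q 1 - p 1)) (h1b : p 1 + t*(q 1 - p 1) ≤ 300) :
    gsq (p + t•(q-p)) = 100 := by
  apply gsq_eq100_v <;> rw [comb_apply]
  · rw [h0]; norm_num
  · rw [abs_le]; constructor <;> linarith

lemma hx_right (p q : V2) (t : ℝ) (h0 : p 0 + t*(q 0 - p 0) = 300)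
    (h1a : 100 ≤ p 1 + t*(q 1 - p 1)) (h1b : p 1 + t*(q 1 - p 1) ≤ 300) :
    gsq (p + t•(q-p)) = 100 := by
  apply gsq_eq100_v <;> rw [comb_apply]
  · rw [h0]; norm_num
  · rw [abs_le]; constructor <;> linarith

lemma S1_mem : gsq S1 < 100 := by
  refine mem_Osq.mp ?_; refine ⟨?_, ?_, ?_, ?_⟩ <;> norm_num [S1, Pt, Osq]
lemma S2_mem : gsq S2 < 100 := by
  refine mem_Osq.mp ?_; refine ⟨?_, ?_, ?_, ?_⟩ <;> norm_num [S2, Pt, Osq]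
lemma S3_mem : gsq S3 < 100 := by
  refine mem_Osq.mp ?_; refine ⟨?_, ?_, ?_, ?_⟩ <;> norm_num [S3, Pt, Osq]
lemma S4_mem : gsq S4 < 100 := by
  refine mem_Osq.mp ?_; refine ⟨?_, ?_, ?_, ?_⟩ <;> norm_num [S4, Pt, Osq]

lemma S1_0 : S1 0 = 160 := rfl
lemma S1_1 : S1 1 = 2849/10 := by norm_num [S1, Pt]
lemma S2_0 : S2 0 = 140 := rfl
lemma S2_1 : S2 1 = 170 := rfl
lemma S3_0 : S3 0 = 130 := rfl
lemma S3_1 : S3 1 = 165 := rfl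
lemma S4_0 : S4 0 = 180 := rfl
lemma S4_1 : S4 1 = 285 := rfl

lemma fs1 (y nx d v : ℝ) (hd : d ≠ 0) (h : y + nx = v) : y + (nx/d)*d = v := by
  rw [div_mul_cancel₀ _ hd]; exact h
lemma fs2 (y nx d v : ℝ) (hd : d ≠ 0) (h : y - nx = v) : y + (nx/d)*(-d) = v := by
  rw [mul_neg, div_mul_cancel₀ _ hd]; linarith

lemma ratio_eval (nx ny d : ℝ) (hd : d ≠ 0) :
    ((1 - nx/d) * (ny/d)) / ((-(nx/d)) * (ny/d - 1)) = ((d - nx) * ny) / ((-nx) * (ny - d)) := by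
  rw [show 1 - nx/d = (d - nx)/d by rw [sub_div]; field_simp,
      show ny/d - 1 = (ny - d)/d by rw [sub_div]; field_simp,
      div_mul_div_comm, ← neg_div, div_mul_div_comm,
      div_div_div_cancel_right₀ (by positivity : d*d ≠ 0)]

lemma ratio_eval_tx (nx c d : ℝ) (hd : d ≠ 0) :
    ((1 - nx/d) * c) / ((-(nx/d)) * (c - 1)) = ((d - nx) * c) / ((-nx) * (c - 1)) := by
  rw [show 1 - nx/d = (d - nx)/d by rw [sub_div]; field_simp,
      div_mul_eq_mul_div, ← neg_div, div_mul_eq_mul_div,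
      div_div_div_cancel_right₀ hd]

lemma ratio_eval_ty (c ny d : ℝ) (hd : d ≠ 0) :
    ((1 - c) * (ny/d)) / ((-c) * (ny/d - 1)) = ((1 - c) * ny) / ((-c) * (ny - d)) := by
  rw [show ny/d - 1 = (ny - d)/d by rw [sub_div]; field_simp,
      mul_div_assoc', mul_div_assoc',
      div_div_div_cancel_right₀ hd]

lemma L1c1_S1 (p : V2) (h0 : p 0 = 115) (hgp : gsq p < 100) (hlo : 100 < p 1) (hhi : p 1 ≤ 265/2) :
    hilbertDist Osq p S1 = 1/2 * Real.log ((((2849/10 - p 1) - (100 - p 1)) * (300 - p 1)) / (-(100 - p 1) * ((300 - p 1) - (2849/10 - p 1)))) := by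
  have hden : (0:ℝ) < (2849/10 - p 1) := by linarith
  have hne : (2849/10 - p 1) ≠ 0 := ne_of_gt hden
  have htx : ((100 - p 1) / (2849/10 - p 1)) < 0 := div_neg_of_neg_of_pos (by linarith) hden
  have hty : 1 < ((300 - p 1) / (2849/10 - p 1)) := by rw [lt_div_iff₀ hden]; linarith
  have htb1x : (-325/1524:ℝ) ≤ (100 - p 1) / (2849/10 - p 1) := by rw [le_div_iff₀ hden]; linarith
  have htb2x : (100 - p 1) / (2849/10 - p 1) ≤ (0:ℝ) := by rw [div_le_iff₀ hden]; linarith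
  have hx : gsq (p + ((100 - p 1) / (2849/10 - p 1))•(S1 - p)) = 100 := by
    refine hx_bottom p S1 _ ?_ ?_ ?_
    · rw [S1_1, show (2849/10:ℝ) - p 1 = (2849/10 - p 1) from by ring]
      exact fs1 _ _ _ _ hne (by ring)
    · rw [S1_0, h0]; nlinarith [htb1x, htb2x]
    · rw [S1_0, h0]; nlinarith [htb1x, htb2x]
  have htb1y : (2000/1849:ℝ) ≤ (300 - p 1) / (2849/10 - p 1) := by rw [le_div_iff₀ hden]; linarith
  have htb2y : (300 - p 1) / (2849/10 - p 1) ≤ (1675/1524:ℝ) := by rw [div_le_iff₀ hden]; linarith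
  have hy : gsq (p + ((300 - p 1) / (2849/10 - p 1))•(S1 - p)) = 100 := by
    refine hx_top p S1 _ ?_ ?_ ?_
    · rw [S1_1, show (2849/10:ℝ) - p 1 = (2849/10 - p 1) from by ring]
      exact fs1 _ _ _ _ hne (by ring)
    · rw [S1_0, h0]; nlinarith [htb1y, htb2y]
    · rw [S1_0, h0]; nlinarith [htb1y, htb2y]
  rw [hd_eval p S1 _ _ htx hty hx hy hgp S1_mem]
  rw [ratio_eval _ _ _ hne]

lemma L1c1_S3 (p : V2) (h0 : p 0 = 115) (hgp : gsq p < 100) (hlo : 100 < p 1) (hhi : p 1 ≤ 265/2) :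
    hilbertDist Osq p S3 = 1/2 * Real.log ((((165 - p 1) - (100 - p 1)) * (300 - p 1)) / (-(100 - p 1) * ((300 - p 1) - (165 - p 1)))) := by
  have hden : (0:ℝ) < (165 - p 1) := by linarith
  have hne : (165 - p 1) ≠ 0 := ne_of_gt hden
  have htx : ((100 - p 1) / (165 - p 1)) < 0 := div_neg_of_neg_of_pos (by linarith) hden
  have hty : 1 < ((300 - p 1) / (165 - p 1)) := by rw [lt_div_iff₀ hden]; linarith
  have htb1x : (-1:ℝ) ≤ (100 - p 1) / (165 - p 1) := by rw [le_div_iff₀ hden]; linarith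
  have htb2x : (100 - p 1) / (165 - p 1) ≤ (0:ℝ) := by rw [div_le_iff₀ hden]; linarith
  have hx : gsq (p + ((100 - p 1) / (165 - p 1))•(S3 - p)) = 100 := by
    refine hx_bottom p S3 _ ?_ ?_ ?_
    · rw [S3_1, show (165:ℝ) - p 1 = (165 - p 1) from by ring]
      exact fs1 _ _ _ _ hne (by ring)
    · rw [S3_0, h0]; nlinarith [htb1x, htb2x]
    · rw [S3_0, h0]; nlinarith [htb1x, htb2x]
  have htb1y : (40/13:ℝ) ≤ (300 - p 1) / (165 - p 1) := by rw [le_div_iff₀ hden]; linarith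
  have htb2y : (300 - p 1) / (165 - p 1) ≤ (67/13:ℝ) := by rw [div_le_iff₀ hden]; linarith
  have hy : gsq (p + ((300 - p 1) / (165 - p 1))•(S3 - p)) = 100 := by
    refine hx_top p S3 _ ?_ ?_ ?_
    · rw [S3_1, show (165:ℝ) - p 1 = (165 - p 1) from by ring]
      exact fs1 _ _ _ _ hne (by ring)
    · rw [S3_0, h0]; nlinarith [htb1y, htb2y]
    · rw [S3_0, h0]; nlinarith [htb1y, htb2y]
  rw [hd_eval p S3 _ _ htx hty hx hy hgp S3_mem]
  rw [ratio_eval _ _ _ hne]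

lemma L1c1 (p : V2) (h0 : p 0 = 115) (hgp : gsq p < 100) (hlo : 100 < p 1) (hhi : p 1 ≤ 265/2) :
    hilbertDist Osq p S3 ≤ hilbertDist Osq p S1 := by
  rw [L1c1_S1 p h0 hgp hlo hhi, L1c1_S3 p h0 hgp hlo hhi]
  apply mul_le_mul_of_nonneg_left _ (by norm_num : (0:ℝ) ≤ 1/2)
  apply Real.log_le_log
  · exact div_pos (mul_pos (by linarith : (0:ℝ) < ((165 - p 1) - (100 - p 1))) (by linarith : (0:ℝ) < (300 - p 1))) (mul_pos (by linarith : (0:ℝ) < -(100 - p 1)) (by linarith : (0:ℝ) < ((300 - p 1) - (165 - p 1))))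
  · rw [div_le_div_iff₀ (mul_pos (by linarith : (0:ℝ) < -(100 - p 1)) (by linarith : (0:ℝ) < ((300 - p 1) - (165 - p 1)))) (mul_pos (by linarith : (0:ℝ) < -(100 - p 1)) (by linarith : (0:ℝ) < ((300 - p 1) - (2849/10 - p 1))))]
    nlinarith [mul_nonneg (pow_nonneg (by linarith : (0:ℝ) ≤ p 1 - 100) 0) (pow_nonneg (by linarith : (0:ℝ) ≤ 265/2 - p 1) 4), mul_nonneg (pow_nonneg (by linarith : (0:ℝ) ≤ p 1 - 100) 1) (pow_nonneg (by linarith : (0:ℝ) ≤ 265/2 - p 1) 3), mul_nonneg (pow_nonneg (by linarith : (0:ℝ) ≤ p 1 - 100) 2) (pow_nonneg (by linarith : (0:ℝ) ≤ 265/2 - p 1) 2), mul_nonneg (pow_nonneg (by linarith : (0:ℝ) ≤ p 1 - 100) 3) (pow_nonneg (by linarith : (0:ℝ) ≤ 265/2 - p 1) 1), mul_nonneg (pow_nonneg (by linarith : (0:ℝ) ≤ p 1 - 100) 4) (pow_nonneg (by linarith : (0:ℝ) ≤ 265/2 - p 1) 0)]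

lemma L1c2_S1 (p : V2) (h0 : p 0 = 115) (hgp : gsq p < 100) (hlo : 265/2 ≤ p 1) (hhi : p 1 ≤ 5849/40) :
    hilbertDist Osq p S1 = 1/2 * Real.log ((((2849/10 - p 1) - (100 - p 1)) * (300 - p 1)) / (-(100 - p 1) * ((300 - p 1) - (2849/10 - p 1)))) := by
  have hden : (0:ℝ) < (2849/10 - p 1) := by linarith
  have hne : (2849/10 - p 1) ≠ 0 := ne_of_gt hden
  have htx : ((100 - p 1) / (2849/10 - p 1)) < 0 := div_neg_of_neg_of_pos (by linarith) hden
  have hty : 1 < ((300 - p 1) / (2849/10 - p 1)) := by rw [lt_div_iff₀ hden]; linarith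
  have htb1x : (-1/3:ℝ) ≤ (100 - p 1) / (2849/10 - p 1) := by rw [le_div_iff₀ hden]; linarith
  have htb2x : (100 - p 1) / (2849/10 - p 1) ≤ (-325/1524:ℝ) := by rw [div_le_iff₀ hden]; linarith
  have hx : gsq (p + ((100 - p 1) / (2849/10 - p 1))•(S1 - p)) = 100 := by
    refine hx_bottom p S1 _ ?_ ?_ ?_
    · rw [S1_1, show (2849/10:ℝ) - p 1 = (2849/10 - p 1) from by ring]
      exact fs1 _ _ _ _ hne (by ring)
    · rw [S1_0, h0]; nlinarith [htb1x, htb2x]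
    · rw [S1_0, h0]; nlinarith [htb1x, htb2x]
  have htb1y : (1675/1524:ℝ) ≤ (300 - p 1) / (2849/10 - p 1) := by rw [le_div_iff₀ hden]; linarith
  have htb2y : (300 - p 1) / (2849/10 - p 1) ≤ (6151/5547:ℝ) := by rw [div_le_iff₀ hden]; linarith
  have hy : gsq (p + ((300 - p 1) / (2849/10 - p 1))•(S1 - p)) = 100 := by
    refine hx_top p S1 _ ?_ ?_ ?_
    · rw [S1_1, show (2849/10:ℝ) - p 1 = (2849/10 - p 1) from by ring]
      exact fs1 _ _ _ _ hne (by ring)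
    · rw [S1_0, h0]; nlinarith [htb1y, htb2y]
    · rw [S1_0, h0]; nlinarith [htb1y, htb2y]
  rw [hd_eval p S1 _ _ htx hty hx hy hgp S1_mem]
  rw [ratio_eval _ _ _ hne]

lemma L1c2_S3 (p : V2) (h0 : p 0 = 115) (hgp : gsq p < 100) (hlo : 265/2 ≤ p 1) (hhi : p 1 ≤ 5849/40) :
    hilbertDist Osq p S3 = 1/2 * Real.log (((1 - (-1)) * (300 - p 1)) / (-(-1) * ((300 - p 1) - (165 - p 1)))) := by
  have hden : (0:ℝ) < (165 - p 1) := by linarith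
  have hne : (165 - p 1) ≠ 0 := ne_of_gt hden
  have htx : (((-1)) : ℝ) < 0 := by norm_num
  have hty : 1 < ((300 - p 1) / (165 - p 1)) := by rw [lt_div_iff₀ hden]; linarith
  have hx : gsq (p + (((-1)) : ℝ)•(S3 - p)) = 100 := by
    refine hx_left p S3 _ ?_ ?_ ?_
    · rw [S3_0, h0]; norm_num
    · rw [S3_1]; linarith
    · rw [S3_1]; linarith
  have htb1y : (67/13:ℝ) ≤ (300 - p 1) / (165 - p 1) := by rw [le_div_iff₀ hden]; linarith
  have htb2y : (300 - p 1) / (165 - p 1) ≤ (6151/751:ℝ) := by rw [div_le_iff₀ hden]; linarith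
  have hy : gsq (p + ((300 - p 1) / (165 - p 1))•(S3 - p)) = 100 := by
    refine hx_top p S3 _ ?_ ?_ ?_
    · rw [S3_1, show (165:ℝ) - p 1 = (165 - p 1) from by ring]
      exact fs1 _ _ _ _ hne (by ring)
    · rw [S3_0, h0]; nlinarith [htb1y, htb2y]
    · rw [S3_0, h0]; nlinarith [htb1y, htb2y]
  rw [hd_eval p S3 _ _ htx hty hx hy hgp S3_mem]
  rw [ratio_eval_ty _ _ _ hne]

lemma L1c2 (p : V2) (h0 : p 0 = 115) (hgp : gsq p < 100) (hlo : 265/2 ≤ p 1) (hhi : p 1 ≤ 5849/40) :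
    hilbertDist Osq p S3 ≤ hilbertDist Osq p S1 := by
  rw [L1c2_S1 p h0 hgp hlo hhi, L1c2_S3 p h0 hgp hlo hhi]
  apply mul_le_mul_of_nonneg_left _ (by norm_num : (0:ℝ) ≤ 1/2)
  apply Real.log_le_log
  · exact div_pos (mul_pos (by linarith : (0:ℝ) < (1 - (-1))) (by linarith : (0:ℝ) < (300 - p 1))) (mul_pos (by linarith : (0:ℝ) < -(-1)) (by linarith : (0:ℝ) < ((300 - p 1) - (165 - p 1))))
  · rw [div_le_div_iff₀ (mul_pos (by linarith : (0:ℝ) < -(-1)) (by linarith : (0:ℝ) < ((300 - p 1) - (165 - p 1)))) (mul_pos (by linarith : (0:ℝ) < -(100 - p 1)) (by linarith : (0:ℝ) < ((300 - p 1) - (2849/10 - p 1))))]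
    nlinarith [mul_nonneg (pow_nonneg (by linarith : (0:ℝ) ≤ p 1 - 265/2) 0) (pow_nonneg (by linarith : (0:ℝ) ≤ 5849/40 - p 1) 4), mul_nonneg (pow_nonneg (by linarith : (0:ℝ) ≤ p 1 - 265/2) 1) (pow_nonneg (by linarith : (0:ℝ) ≤ 5849/40 - p 1) 3), mul_nonneg (pow_nonneg (by linarith : (0:ℝ) ≤ p 1 - 265/2) 2) (pow_nonneg (by linarith : (0:ℝ) ≤ 5849/40 - p 1) 2), mul_nonneg (pow_nonneg (by linarith : (0:ℝ) ≤ p 1 - 265/2) 3) (pow_nonneg (by linarith : (0:ℝ) ≤ 5849/40 - p 1) 1), mul_nonneg (pow_nonneg (by linarith : (0:ℝ) ≤ p 1 - 265/2) 4) (pow_nonneg (by linarith : (0:ℝ) ≤ 5849/40 - p 1) 0)]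

lemma L1c3_S1 (p : V2) (h0 : p 0 = 115) (hgp : gsq p < 100) (hlo : 5849/40 ≤ p 1) (hhi : p 1 ≤ 5205/34) :
    hilbertDist Osq p S1 = 1/2 * Real.log (((1 - (-1/3)) * (300 - p 1)) / (-(-1/3) * ((300 - p 1) - (2849/10 - p 1)))) := by
  have hden : (0:ℝ) < (2849/10 - p 1) := by linarith
  have hne : (2849/10 - p 1) ≠ 0 := ne_of_gt hden
  have htx : (((-1/3)) : ℝ) < 0 := by norm_num
  have hty : 1 < ((300 - p 1) / (2849/10 - p 1)) := by rw [lt_div_iff₀ hden]; linarith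
  have hx : gsq (p + (((-1/3)) : ℝ)•(S1 - p)) = 100 := by
    refine hx_left p S1 _ ?_ ?_ ?_
    · rw [S1_0, h0]; norm_num
    · rw [S1_1]; linarith
    · rw [S1_1]; linarith
  have htb1y : (6151/5547:ℝ) ≤ (300 - p 1) / (2849/10 - p 1) := by rw [le_div_iff₀ hden]; linarith
  have htb2y : (300 - p 1) / (2849/10 - p 1) ≤ (24975/22408:ℝ) := by rw [div_le_iff₀ hden]; linarith
  have hy : gsq (p + ((300 - p 1) / (2849/10 - p 1))•(S1 - p)) = 100 := by
    refine hx_top p S1 _ ?_ ?_ ?_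
    · rw [S1_1, show (2849/10:ℝ) - p 1 = (2849/10 - p 1) from by ring]
      exact fs1 _ _ _ _ hne (by ring)
    · rw [S1_0, h0]; nlinarith [htb1y, htb2y]
    · rw [S1_0, h0]; nlinarith [htb1y, htb2y]
  rw [hd_eval p S1 _ _ htx hty hx hy hgp S1_mem]
  rw [ratio_eval_ty _ _ _ hne]

lemma L1c3_S3 (p : V2) (h0 : p 0 = 115) (hgp : gsq p < 100) (hlo : 5849/40 ≤ p 1) (hhi : p 1 ≤ 5205/34) :
    hilbertDist Osq p S3 = 1/2 * Real.log (((1 - (-1)) * (300 - p 1)) / (-(-1) * ((300 - p 1) - (165 - p 1)))) := by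
  have hden : (0:ℝ) < (165 - p 1) := by linarith
  have hne : (165 - p 1) ≠ 0 := ne_of_gt hden
  have htx : (((-1)) : ℝ) < 0 := by norm_num
  have hty : 1 < ((300 - p 1) / (165 - p 1)) := by rw [lt_div_iff₀ hden]; linarith
  have hx : gsq (p + (((-1)) : ℝ)•(S3 - p)) = 100 := by
    refine hx_left p S3 _ ?_ ?_ ?_
    · rw [S3_0, h0]; norm_num
    · rw [S3_1]; linarith
    · rw [S3_1]; linarith
  have htb1y : (6151/751:ℝ) ≤ (300 - p 1) / (165 - p 1) := by rw [le_div_iff₀ hden]; linarith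
  have htb2y : (300 - p 1) / (165 - p 1) ≤ (37/3:ℝ) := by rw [div_le_iff₀ hden]; linarith
  have hy : gsq (p + ((300 - p 1) / (165 - p 1))•(S3 - p)) = 100 := by
    refine hx_top p S3 _ ?_ ?_ ?_
    · rw [S3_1, show (165:ℝ) - p 1 = (165 - p 1) from by ring]
      exact fs1 _ _ _ _ hne (by ring)
    · rw [S3_0, h0]; nlinarith [htb1y, htb2y]
    · rw [S3_0, h0]; nlinarith [htb1y, htb2y]
  rw [hd_eval p S3 _ _ htx hty hx hy hgp S3_mem]
  rw [ratio_eval_ty _ _ _ hne]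

lemma L1c3 (p : V2) (h0 : p 0 = 115) (hgp : gsq p < 100) (hlo : 5849/40 ≤ p 1) (hhi : p 1 ≤ 5205/34) :
    hilbertDist Osq p S3 ≤ hilbertDist Osq p S1 := by
  rw [L1c3_S1 p h0 hgp hlo hhi, L1c3_S3 p h0 hgp hlo hhi]
  apply mul_le_mul_of_nonneg_left _ (by norm_num : (0:ℝ) ≤ 1/2)
  apply Real.log_le_log
  · exact div_pos (mul_pos (by linarith : (0:ℝ) < (1 - (-1))) (by linarith : (0:ℝ) < (300 - p 1))) (mul_pos (by linarith : (0:ℝ) < -(-1)) (by linarith : (0:ℝ) < ((300 - p 1) - (165 - p 1))))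
  · rw [div_le_div_iff₀ (mul_pos (by linarith : (0:ℝ) < -(-1)) (by linarith : (0:ℝ) < ((300 - p 1) - (165 - p 1)))) (mul_pos (by linarith : (0:ℝ) < -(-1/3)) (by linarith : (0:ℝ) < ((300 - p 1) - (2849/10 - p 1))))]
    nlinarith [mul_nonneg (pow_nonneg (by linarith : (0:ℝ) ≤ p 1 - 5849/40) 0) (pow_nonneg (by linarith : (0:ℝ) ≤ 5205/34 - p 1) 4), mul_nonneg (pow_nonneg (by linarith : (0:ℝ) ≤ p 1 - 5849/40) 1) (pow_nonneg (by linarith : (0:ℝ) ≤ 5205/34 - p 1) 3), mul_nonneg (pow_nonneg (by linarith : (0:ℝ) ≤ p 1 - 5849/40) 2) (pow_nonneg (by linarith : (0:ℝ) ≤ 5205/34 - p 1) 2), mul_nonneg (pow_nonneg (by linarith : (0:ℝ) ≤ p 1 - 5849/40) 3) (pow_nonneg (by linarith : (0:ℝ) ≤ 5205/34 - p 1) 1), mul_nonneg (pow_nonneg (by linarith : (0:ℝ) ≤ p 1 - 5849/40) 4) (pow_nonneg (by linarith : (0:ℝ) ≤ 5205/34 - p 1) 0)]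

lemma L1c4_S1 (p : V2) (h0 : p 0 = 115) (hgp : gsq p < 100) (hlo : 5205/34 ≤ p 1) (hhi : p 1 ≤ 5805/34) :
    hilbertDist Osq p S1 = 1/2 * Real.log (((1 - (-1/3)) * (300 - p 1)) / (-(-1/3) * ((300 - p 1) - (2849/10 - p 1)))) := by
  have hden : (0:ℝ) < (2849/10 - p 1) := by linarith
  have hne : (2849/10 - p 1) ≠ 0 := ne_of_gt hden
  have htx : (((-1/3)) : ℝ) < 0 := by norm_num
  have hty : 1 < ((300 - p 1) / (2849/10 - p 1)) := by rw [lt_div_iff₀ hden]; linarith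
  have hx : gsq (p + (((-1/3)) : ℝ)•(S1 - p)) = 100 := by
    refine hx_left p S1 _ ?_ ?_ ?_
    · rw [S1_0, h0]; norm_num
    · rw [S1_1]; linarith
    · rw [S1_1]; linarith
  have htb1y : (24975/22408:ℝ) ≤ (300 - p 1) / (2849/10 - p 1) := by rw [le_div_iff₀ hden]; linarith
  have htb2y : (300 - p 1) / (2849/10 - p 1) ≤ (21975/19408:ℝ) := by rw [div_le_iff₀ hden]; linarith
  have hy : gsq (p + ((300 - p 1) / (2849/10 - p 1))•(S1 - p)) = 100 := by
    refine hx_top p S1 _ ?_ ?_ ?_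
    · rw [S1_1, show (2849/10:ℝ) - p 1 = (2849/10 - p 1) from by ring]
      exact fs1 _ _ _ _ hne (by ring)
    · rw [S1_0, h0]; nlinarith [htb1y, htb2y]
    · rw [S1_0, h0]; nlinarith [htb1y, htb2y]
  rw [hd_eval p S1 _ _ htx hty hx hy hgp S1_mem]
  rw [ratio_eval_ty _ _ _ hne]

lemma L1c4_S3 (p : V2) (h0 : p 0 = 115) (hgp : gsq p < 100) (hlo : 5205/34 ≤ p 1) (hhi : p 1 ≤ 5805/34) :
    hilbertDist Osq p S3 = 1/2 * Real.log (((1 - (-1)) * (37/3)) / (-(-1) * ((37/3) - 1))) := by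
  have htx : (((-1)) : ℝ) < 0 := by norm_num
  have hty : (1:ℝ) < (((37/3)) : ℝ) := by norm_num
  have hx : gsq (p + (((-1)) : ℝ)•(S3 - p)) = 100 := by
    refine hx_left p S3 _ ?_ ?_ ?_
    · rw [S3_0, h0]; norm_num
    · rw [S3_1]; linarith
    · rw [S3_1]; linarith
  have hy : gsq (p + (((37/3)) : ℝ)•(S3 - p)) = 100 := by
    refine hx_right p S3 _ ?_ ?_ ?_
    · rw [S3_0, h0]; norm_num
    · rw [S3_1]; linarith
    · rw [S3_1]; linarith
  rw [hd_eval p S3 _ _ htx hty hx hy hgp S3_mem]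

lemma L1c4 (p : V2) (h0 : p 0 = 115) (hgp : gsq p < 100) (hlo : 5205/34 ≤ p 1) (hhi : p 1 ≤ 5805/34) :
    hilbertDist Osq p S3 ≤ hilbertDist Osq p S1 := by
  rw [L1c4_S1 p h0 hgp hlo hhi, L1c4_S3 p h0 hgp hlo hhi]
  apply mul_le_mul_of_nonneg_left _ (by norm_num : (0:ℝ) ≤ 1/2)
  apply Real.log_le_log
  · exact div_pos (mul_pos (by linarith : (0:ℝ) < (1 - (-1))) (by linarith : (0:ℝ) < (37/3))) (mul_pos (by linarith : (0:ℝ) < -(-1)) (by linarith : (0:ℝ) < ((37/3) - 1)))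
  · rw [div_le_div_iff₀ (mul_pos (by linarith : (0:ℝ) < -(-1)) (by linarith : (0:ℝ) < ((37/3) - 1))) (mul_pos (by linarith : (0:ℝ) < -(-1/3)) (by linarith : (0:ℝ) < ((300 - p 1) - (2849/10 - p 1))))]
    nlinarith [mul_nonneg (pow_nonneg (by linarith : (0:ℝ) ≤ p 1 - 5205/34) 0) (pow_nonneg (by linarith : (0:ℝ) ≤ 5805/34 - p 1) 4), mul_nonneg (pow_nonneg (by linarith : (0:ℝ) ≤ p 1 - 5205/34) 1) (pow_nonneg (by linarith : (0:ℝ) ≤ 5805/34 - p 1) 3), mul_nonneg (pow_nonneg (by linarith : (0:ℝ) ≤ p 1 - 5205/34) 2) (pow_nonneg (by linarith : (0:ℝ) ≤ 5805/34 - p 1) 2), mul_nonneg (pow_nonneg (by linarith : (0:ℝ) ≤ p 1 - 5205/34) 3) (pow_nonneg (by linarith : (0:ℝ) ≤ 5805/34 - p 1) 1), mul_nonneg (pow_nonneg (by linarith : (0:ℝ) ≤ p 1 - 5205/34) 4) (pow_nonneg (by linarith : (0:ℝ) ≤ 5805/34 - p 1) 0)]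

lemma L1c5_S1 (p : V2) (h0 : p 0 = 115) (hgp : gsq p < 100) (hlo : 5805/34 ≤ p 1) (hhi : p 1 ≤ 465/2) :
    hilbertDist Osq p S1 = 1/2 * Real.log (((1 - (-1/3)) * (300 - p 1)) / (-(-1/3) * ((300 - p 1) - (2849/10 - p 1)))) := by
  have hden : (0:ℝ) < (2849/10 - p 1) := by linarith
  have hne : (2849/10 - p 1) ≠ 0 := ne_of_gt hden
  have htx : (((-1/3)) : ℝ) < 0 := by norm_num
  have hty : 1 < ((300 - p 1) / (2849/10 - p 1)) := by rw [lt_div_iff₀ hden]; linarith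
  have hx : gsq (p + (((-1/3)) : ℝ)•(S1 - p)) = 100 := by
    refine hx_left p S1 _ ?_ ?_ ?_
    · rw [S1_0, h0]; norm_num
    · rw [S1_1]; linarith
    · rw [S1_1]; linarith
  have htb1y : (21975/19408:ℝ) ≤ (300 - p 1) / (2849/10 - p 1) := by rw [le_div_iff₀ hden]; linarith
  have htb2y : (300 - p 1) / (2849/10 - p 1) ≤ (675/524:ℝ) := by rw [div_le_iff₀ hden]; linarith
  have hy : gsq (p + ((300 - p 1) / (2849/10 - p 1))•(S1 - p)) = 100 := by
    refine hx_top p S1 _ ?_ ?_ ?_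
    · rw [S1_1, show (2849/10:ℝ) - p 1 = (2849/10 - p 1) from by ring]
      exact fs1 _ _ _ _ hne (by ring)
    · rw [S1_0, h0]; nlinarith [htb1y, htb2y]
    · rw [S1_0, h0]; nlinarith [htb1y, htb2y]
  rw [hd_eval p S1 _ _ htx hty hx hy hgp S1_mem]
  rw [ratio_eval_ty _ _ _ hne]

lemma L1c5_S3 (p : V2) (h0 : p 0 = 115) (hgp : gsq p < 100) (hlo : 5805/34 ≤ p 1) (hhi : p 1 ≤ 465/2) :
    hilbertDist Osq p S3 = 1/2 * Real.log (((1 - (-1)) * (p 1 - 100)) / (-(-1) * ((p 1 - 100) - (p 1 - 165)))) := by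
  have hden : (0:ℝ) < (p 1 - 165) := by linarith
  have hne : (p 1 - 165) ≠ 0 := ne_of_gt hden
  have htx : (((-1)) : ℝ) < 0 := by norm_num
  have hty : 1 < ((p 1 - 100) / (p 1 - 165)) := by rw [lt_div_iff₀ hden]; linarith
  have hx : gsq (p + (((-1)) : ℝ)•(S3 - p)) = 100 := by
    refine hx_left p S3 _ ?_ ?_ ?_
    · rw [S3_0, h0]; norm_num
    · rw [S3_1]; linarith
    · rw [S3_1]; linarith
  have htb1y : (53/27:ℝ) ≤ (p 1 - 100) / (p 1 - 165) := by rw [le_div_iff₀ hden]; linarith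
  have htb2y : (p 1 - 100) / (p 1 - 165) ≤ (37/3:ℝ) := by rw [div_le_iff₀ hden]; linarith
  have hy : gsq (p + ((p 1 - 100) / (p 1 - 165))•(S3 - p)) = 100 := by
    refine hx_bottom p S3 _ ?_ ?_ ?_
    · rw [S3_1, show (165:ℝ) - p 1 = -(p 1 - 165) from by ring]
      exact fs2 _ _ _ _ hne (by ring)
    · rw [S3_0, h0]; nlinarith [htb1y, htb2y]
    · rw [S3_0, h0]; nlinarith [htb1y, htb2y]
  rw [hd_eval p S3 _ _ htx hty hx hy hgp S3_mem]
  rw [ratio_eval_ty _ _ _ hne]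

lemma L1c5 (p : V2) (h0 : p 0 = 115) (hgp : gsq p < 100) (hlo : 5805/34 ≤ p 1) (hhi : p 1 ≤ 465/2) :
    hilbertDist Osq p S3 ≤ hilbertDist Osq p S1 := by
  rw [L1c5_S1 p h0 hgp hlo hhi, L1c5_S3 p h0 hgp hlo hhi]
  apply mul_le_mul_of_nonneg_left _ (by norm_num : (0:ℝ) ≤ 1/2)
  apply Real.log_le_log
  · exact div_pos (mul_pos (by linarith : (0:ℝ) < (1 - (-1))) (by linarith : (0:ℝ) < (p 1 - 100))) (mul_pos (by linarith : (0:ℝ) < -(-1)) (by linarith : (0:ℝ) < ((p 1 - 100) - (p 1 - 165))))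
  · rw [div_le_div_iff₀ (mul_pos (by linarith : (0:ℝ) < -(-1)) (by linarith : (0:ℝ) < ((p 1 - 100) - (p 1 - 165)))) (mul_pos (by linarith : (0:ℝ) < -(-1/3)) (by linarith : (0:ℝ) < ((300 - p 1) - (2849/10 - p 1))))]
    nlinarith [mul_nonneg (pow_nonneg (by linarith : (0:ℝ) ≤ p 1 - 5805/34) 0) (pow_nonneg (by linarith : (0:ℝ) ≤ 465/2 - p 1) 4), mul_nonneg (pow_nonneg (by linarith : (0:ℝ) ≤ p 1 - 5805/34) 1) (pow_nonneg (by linarith : (0:ℝ) ≤ 465/2 - p 1) 3), mul_nonneg (pow_nonneg (by linarith : (0:ℝ) ≤ p 1 - 5805/34) 2) (pow_nonneg (by linarith : (0:ℝ) ≤ 465/2 - p 1) 2), mul_nonneg (pow_nonneg (by linarith : (0:ℝ) ≤ p 1 - 5805/34) 3) (pow_nonneg (by linarith : (0:ℝ) ≤ 465/2 - p 1) 1), mul_nonneg (pow_nonneg (by linarith : (0:ℝ) ≤ p 1 - 5805/34) 4) (pow_nonneg (by linarith : (0:ℝ) ≤ 465/2 - p 1) 0)]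

lemma L1c6_S1 (p : V2) (h0 : p 0 = 115) (hgp : gsq p < 100) (hlo : 465/2 ≤ p 1) (hhi : p 1 ≤ 264) :
    hilbertDist Osq p S1 = 1/2 * Real.log (((1 - (-1/3)) * (300 - p 1)) / (-(-1/3) * ((300 - p 1) - (2849/10 - p 1)))) := by
  have hden : (0:ℝ) < (2849/10 - p 1) := by linarith
  have hne : (2849/10 - p 1) ≠ 0 := ne_of_gt hden
  have htx : (((-1/3)) : ℝ) < 0 := by norm_num
  have hty : 1 < ((300 - p 1) / (2849/10 - p 1)) := by rw [lt_div_iff₀ hden]; linarith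
  have hx : gsq (p + (((-1/3)) : ℝ)•(S1 - p)) = 100 := by
    refine hx_left p S1 _ ?_ ?_ ?_
    · rw [S1_0, h0]; norm_num
    · rw [S1_1]; linarith
    · rw [S1_1]; linarith
  have htb1y : (675/524:ℝ) ≤ (300 - p 1) / (2849/10 - p 1) := by rw [le_div_iff₀ hden]; linarith
  have htb2y : (300 - p 1) / (2849/10 - p 1) ≤ (360/209:ℝ) := by rw [div_le_iff₀ hden]; linarith
  have hy : gsq (p + ((300 - p 1) / (2849/10 - p 1))•(S1 - p)) = 100 := by
    refine hx_top p S1 _ ?_ ?_ ?_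
    · rw [S1_1, show (2849/10:ℝ) - p 1 = (2849/10 - p 1) from by ring]
      exact fs1 _ _ _ _ hne (by ring)
    · rw [S1_0, h0]; nlinarith [htb1y, htb2y]
    · rw [S1_0, h0]; nlinarith [htb1y, htb2y]
  rw [hd_eval p S1 _ _ htx hty hx hy hgp S1_mem]
  rw [ratio_eval_ty _ _ _ hne]

lemma L1c6_S3 (p : V2) (h0 : p 0 = 115) (hgp : gsq p < 100) (hlo : 465/2 ≤ p 1) (hhi : p 1 ≤ 264) :
    hilbertDist Osq p S3 = 1/2 * Real.log ((((p 1 - 165) - (p 1 - 300)) * (p 1 - 100)) / (-(p 1 - 300) * ((p 1 - 100) - (p 1 - 165)))) := by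
  have hden : (0:ℝ) < (p 1 - 165) := by linarith
  have hne : (p 1 - 165) ≠ 0 := ne_of_gt hden
  have htx : ((p 1 - 300) / (p 1 - 165)) < 0 := div_neg_of_neg_of_pos (by linarith) hden
  have hty : 1 < ((p 1 - 100) / (p 1 - 165)) := by rw [lt_div_iff₀ hden]; linarith
  have htb1x : (-1:ℝ) ≤ (p 1 - 300) / (p 1 - 165) := by rw [le_div_iff₀ hden]; linarith
  have htb2x : (p 1 - 300) / (p 1 - 165) ≤ (-4/11:ℝ) := by rw [div_le_iff₀ hden]; linarith
  have hx : gsq (p + ((p 1 - 300) / (p 1 - 165))•(S3 - p)) = 100 := by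
    refine hx_top p S3 _ ?_ ?_ ?_
    · rw [S3_1, show (165:ℝ) - p 1 = -(p 1 - 165) from by ring]
      exact fs2 _ _ _ _ hne (by ring)
    · rw [S3_0, h0]; nlinarith [htb1x, htb2x]
    · rw [S3_0, h0]; nlinarith [htb1x, htb2x]
  have htb1y : (164/99:ℝ) ≤ (p 1 - 100) / (p 1 - 165) := by rw [le_div_iff₀ hden]; linarith
  have htb2y : (p 1 - 100) / (p 1 - 165) ≤ (53/27:ℝ) := by rw [div_le_iff₀ hden]; linarith
  have hy : gsq (p + ((p 1 - 100) / (p 1 - 165))•(S3 - p)) = 100 := by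
    refine hx_bottom p S3 _ ?_ ?_ ?_
    · rw [S3_1, show (165:ℝ) - p 1 = -(p 1 - 165) from by ring]
      exact fs2 _ _ _ _ hne (by ring)
    · rw [S3_0, h0]; nlinarith [htb1y, htb2y]
    · rw [S3_0, h0]; nlinarith [htb1y, htb2y]
  rw [hd_eval p S3 _ _ htx hty hx hy hgp S3_mem]
  rw [ratio_eval _ _ _ hne]

lemma L1c6 (p : V2) (h0 : p 0 = 115) (hgp : gsq p < 100) (hlo : 465/2 ≤ p 1) (hhi : p 1 ≤ 264) :
    hilbertDist Osq p S3 ≤ hilbertDist Osq p S1 := by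
  rw [L1c6_S1 p h0 hgp hlo hhi, L1c6_S3 p h0 hgp hlo hhi]
  apply mul_le_mul_of_nonneg_left _ (by norm_num : (0:ℝ) ≤ 1/2)
  apply Real.log_le_log
  · exact div_pos (mul_pos (by linarith : (0:ℝ) < ((p 1 - 165) - (p 1 - 300))) (by linarith : (0:ℝ) < (p 1 - 100))) (mul_pos (by linarith : (0:ℝ) < -(p 1 - 300)) (by linarith : (0:ℝ) < ((p 1 - 100) - (p 1 - 165))))
  · rw [div_le_div_iff₀ (mul_pos (by linarith : (0:ℝ) < -(p 1 - 300)) (by linarith : (0:ℝ) < ((p 1 - 100) - (p 1 - 165)))) (mul_pos (by linarith : (0:ℝ) < -(-1/3)) (by linarith : (0:ℝ) < ((300 - p 1) - (2849/10 - p 1))))]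
    nlinarith [mul_nonneg (pow_nonneg (by linarith : (0:ℝ) ≤ p 1 - 465/2) 0) (pow_nonneg (by linarith : (0:ℝ) ≤ 264 - p 1) 4), mul_nonneg (pow_nonneg (by linarith : (0:ℝ) ≤ p 1 - 465/2) 1) (pow_nonneg (by linarith : (0:ℝ) ≤ 264 - p 1) 3), mul_nonneg (pow_nonneg (by linarith : (0:ℝ) ≤ p 1 - 465/2) 2) (pow_nonneg (by linarith : (0:ℝ) ≤ 264 - p 1) 2), mul_nonneg (pow_nonneg (by linarith : (0:ℝ) ≤ p 1 - 465/2) 3) (pow_nonneg (by linarith : (0:ℝ) ≤ 264 - p 1) 1), mul_nonneg (pow_nonneg (by linarith : (0:ℝ) ≤ p 1 - 465/2) 4) (pow_nonneg (by linarith : (0:ℝ) ≤ 264 - p 1) 0)]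

lemma L2c1_S2 (p : V2) (h0 : p 0 = 108) (hgp : gsq p < 100) (hlo : 280 ≤ p 1) (hhi : p 1 ≤ 597/2) :
    hilbertDist Osq p S2 = 1/2 * Real.log ((((p 1 - 170) - (p 1 - 300)) * (p 1 - 100)) / (-(p 1 - 300) * ((p 1 - 100) - (p 1 - 170)))) := by
  have hden : (0:ℝ) < (p 1 - 170) := by linarith
  have hne : (p 1 - 170) ≠ 0 := ne_of_gt hden
  have htx : ((p 1 - 300) / (p 1 - 170)) < 0 := div_neg_of_neg_of_pos (by linarith) hden
  have hty : 1 < ((p 1 - 100) / (p 1 - 170)) := by rw [lt_div_iff₀ hden]; linarith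
  have htb1x : (-2/11:ℝ) ≤ (p 1 - 300) / (p 1 - 170) := by rw [le_div_iff₀ hden]; linarith
  have htb2x : (p 1 - 300) / (p 1 - 170) ≤ (-3/257:ℝ) := by rw [div_le_iff₀ hden]; linarith
  have hx : gsq (p + ((p 1 - 300) / (p 1 - 170))•(S2 - p)) = 100 := by
    refine hx_top p S2 _ ?_ ?_ ?_
    · rw [S2_1, show (170:ℝ) - p 1 = -(p 1 - 170) from by ring]
      exact fs2 _ _ _ _ hne (by ring)
    · rw [S2_0, h0]; nlinarith [htb1x, htb2x]
    · rw [S2_0, h0]; nlinarith [htb1x, htb2x]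
  have htb1y : (397/257:ℝ) ≤ (p 1 - 100) / (p 1 - 170) := by rw [le_div_iff₀ hden]; linarith
  have htb2y : (p 1 - 100) / (p 1 - 170) ≤ (18/11:ℝ) := by rw [div_le_iff₀ hden]; linarith
  have hy : gsq (p + ((p 1 - 100) / (p 1 - 170))•(S2 - p)) = 100 := by
    refine hx_bottom p S2 _ ?_ ?_ ?_
    · rw [S2_1, show (170:ℝ) - p 1 = -(p 1 - 170) from by ring]
      exact fs2 _ _ _ _ hne (by ring)
    · rw [S2_0, h0]; nlinarith [htb1y, htb2y]
    · rw [S2_0, h0]; nlinarith [htb1y, htb2y]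
  rw [hd_eval p S2 _ _ htx hty hx hy hgp S2_mem]
  rw [ratio_eval _ _ _ hne]

lemma L2c1_S4 (p : V2) (h0 : p 0 = 108) (hgp : gsq p < 100) (hlo : 280 ≤ p 1) (hhi : p 1 ≤ 597/2) :
    hilbertDist Osq p S4 = 1/2 * Real.log (((1 - (-1/9)) * (8/3)) / (-(-1/9) * ((8/3) - 1))) := by
  have htx : (((-1/9)) : ℝ) < 0 := by norm_num
  have hty : (1:ℝ) < (((8/3)) : ℝ) := by norm_num
  have hx : gsq (p + (((-1/9)) : ℝ)•(S4 - p)) = 100 := by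
    refine hx_left p S4 _ ?_ ?_ ?_
    · rw [S4_0, h0]; norm_num
    · rw [S4_1]; linarith
    · rw [S4_1]; linarith
  have hy : gsq (p + (((8/3)) : ℝ)•(S4 - p)) = 100 := by
    refine hx_right p S4 _ ?_ ?_ ?_
    · rw [S4_0, h0]; norm_num
    · rw [S4_1]; linarith
    · rw [S4_1]; linarith
  rw [hd_eval p S4 _ _ htx hty hx hy hgp S4_mem]

lemma L2c1 (p : V2) (h0 : p 0 = 108) (hgp : gsq p < 100) (hlo : 280 ≤ p 1) (hhi : p 1 ≤ 597/2) :
    hilbertDist Osq p S4 ≤ hilbertDist Osq p S2 := by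
  rw [L2c1_S2 p h0 hgp hlo hhi, L2c1_S4 p h0 hgp hlo hhi]
  apply mul_le_mul_of_nonneg_left _ (by norm_num : (0:ℝ) ≤ 1/2)
  apply Real.log_le_log
  · exact div_pos (mul_pos (by linarith : (0:ℝ) < (1 - (-1/9))) (by linarith : (0:ℝ) < (8/3))) (mul_pos (by linarith : (0:ℝ) < -(-1/9)) (by linarith : (0:ℝ) < ((8/3) - 1)))
  · rw [div_le_div_iff₀ (mul_pos (by linarith : (0:ℝ) < -(-1/9)) (by linarith : (0:ℝ) < ((8/3) - 1))) (mul_pos (by linarith : (0:ℝ) < -(p 1 - 300)) (by linarith : (0:ℝ) < ((p 1 - 100) - (p 1 - 170))))]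
    nlinarith [mul_nonneg (pow_nonneg (by linarith : (0:ℝ) ≤ p 1 - 280) 0) (pow_nonneg (by linarith : (0:ℝ) ≤ 597/2 - p 1) 4), mul_nonneg (pow_nonneg (by linarith : (0:ℝ) ≤ p 1 - 280) 1) (pow_nonneg (by linarith : (0:ℝ) ≤ 597/2 - p 1) 3), mul_nonneg (pow_nonneg (by linarith : (0:ℝ) ≤ p 1 - 280) 2) (pow_nonneg (by linarith : (0:ℝ) ≤ 597/2 - p 1) 2), mul_nonneg (pow_nonneg (by linarith : (0:ℝ) ≤ p 1 - 280) 3) (pow_nonneg (by linarith : (0:ℝ) ≤ 597/2 - p 1) 1), mul_nonneg (pow_nonneg (by linarith : (0:ℝ) ≤ p 1 - 280) 4) (pow_nonneg (by linarith : (0:ℝ) ≤ 597/2 - p 1) 0)]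

lemma L2c2_S2 (p : V2) (h0 : p 0 = 108) (hgp : gsq p < 100) (hlo : 597/2 ≤ p 1) (hhi : p 1 < 300) :
    hilbertDist Osq p S2 = 1/2 * Real.log ((((p 1 - 170) - (p 1 - 300)) * (p 1 - 100)) / (-(p 1 - 300) * ((p 1 - 100) - (p 1 - 170)))) := by
  have hden : (0:ℝ) < (p 1 - 170) := by linarith
  have hne : (p 1 - 170) ≠ 0 := ne_of_gt hden
  have htx : ((p 1 - 300) / (p 1 - 170)) < 0 := div_neg_of_neg_of_pos (by linarith) hden
  have hty : 1 < ((p 1 - 100) / (p 1 - 170)) := by rw [lt_div_iff₀ hden]; linarith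
  have htb1x : (-3/257:ℝ) ≤ (p 1 - 300) / (p 1 - 170) := by rw [le_div_iff₀ hden]; linarith
  have htb2x : (p 1 - 300) / (p 1 - 170) ≤ (0:ℝ) := by rw [div_le_iff₀ hden]; linarith
  have hx : gsq (p + ((p 1 - 300) / (p 1 - 170))•(S2 - p)) = 100 := by
    refine hx_top p S2 _ ?_ ?_ ?_
    · rw [S2_1, show (170:ℝ) - p 1 = -(p 1 - 170) from by ring]
      exact fs2 _ _ _ _ hne (by ring)
    · rw [S2_0, h0]; nlinarith [htb1x, htb2x]
    · rw [S2_0, h0]; nlinarith [htb1x, htb2x]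
  have htb1y : (20/13:ℝ) ≤ (p 1 - 100) / (p 1 - 170) := by rw [le_div_iff₀ hden]; linarith
  have htb2y : (p 1 - 100) / (p 1 - 170) ≤ (397/257:ℝ) := by rw [div_le_iff₀ hden]; linarith
  have hy : gsq (p + ((p 1 - 100) / (p 1 - 170))•(S2 - p)) = 100 := by
    refine hx_bottom p S2 _ ?_ ?_ ?_
    · rw [S2_1, show (170:ℝ) - p 1 = -(p 1 - 170) from by ring]
      exact fs2 _ _ _ _ hne (by ring)
    · rw [S2_0, h0]; nlinarith [htb1y, htb2y]
    · rw [S2_0, h0]; nlinarith [htb1y, htb2y]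
  rw [hd_eval p S2 _ _ htx hty hx hy hgp S2_mem]
  rw [ratio_eval _ _ _ hne]

lemma L2c2_S4 (p : V2) (h0 : p 0 = 108) (hgp : gsq p < 100) (hlo : 597/2 ≤ p 1) (hhi : p 1 < 300) :
    hilbertDist Osq p S4 = 1/2 * Real.log ((((p 1 - 285) - (p 1 - 300)) * (8/3)) / (-(p 1 - 300) * ((8/3) - 1))) := by
  have hden : (0:ℝ) < (p 1 - 285) := by linarith
  have hne : (p 1 - 285) ≠ 0 := ne_of_gt hden
  have htx : ((p 1 - 300) / (p 1 - 285)) < 0 := div_neg_of_neg_of_pos (by linarith) hden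
  have hty : (1:ℝ) < (((8/3)) : ℝ) := by norm_num
  have htb1x : (-1/9:ℝ) ≤ (p 1 - 300) / (p 1 - 285) := by rw [le_div_iff₀ hden]; linarith
  have htb2x : (p 1 - 300) / (p 1 - 285) ≤ (0:ℝ) := by rw [div_le_iff₀ hden]; linarith
  have hx : gsq (p + ((p 1 - 300) / (p 1 - 285))•(S4 - p)) = 100 := by
    refine hx_top p S4 _ ?_ ?_ ?_
    · rw [S4_1, show (285:ℝ) - p 1 = -(p 1 - 285) from by ring]
      exact fs2 _ _ _ _ hne (by ring)
    · rw [S4_0, h0]; nlinarith [htb1x, htb2x]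
    · rw [S4_0, h0]; nlinarith [htb1x, htb2x]
  have hy : gsq (p + (((8/3)) : ℝ)•(S4 - p)) = 100 := by
    refine hx_right p S4 _ ?_ ?_ ?_
    · rw [S4_0, h0]; norm_num
    · rw [S4_1]; linarith
    · rw [S4_1]; linarith
  rw [hd_eval p S4 _ _ htx hty hx hy hgp S4_mem]
  rw [ratio_eval_tx _ _ _ hne]

lemma L2c2 (p : V2) (h0 : p 0 = 108) (hgp : gsq p < 100) (hlo : 597/2 ≤ p 1) (hhi : p 1 < 300) :
    hilbertDist Osq p S4 ≤ hilbertDist Osq p S2 := by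
  rw [L2c2_S2 p h0 hgp hlo hhi, L2c2_S4 p h0 hgp hlo hhi]
  apply mul_le_mul_of_nonneg_left _ (by norm_num : (0:ℝ) ≤ 1/2)
  apply Real.log_le_log
  · exact div_pos (mul_pos (by linarith : (0:ℝ) < ((p 1 - 285) - (p 1 - 300))) (by linarith : (0:ℝ) < (8/3))) (mul_pos (by linarith : (0:ℝ) < -(p 1 - 300)) (by linarith : (0:ℝ) < ((8/3) - 1)))
  · rw [div_le_div_iff₀ (mul_pos (by linarith : (0:ℝ) < -(p 1 - 300)) (by linarith : (0:ℝ) < ((8/3) - 1))) (mul_pos (by linarith : (0:ℝ) < -(p 1 - 300)) (by linarith : (0:ℝ) < ((p 1 - 100) - (p 1 - 170))))]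
    nlinarith [mul_nonneg (pow_nonneg (by linarith : (0:ℝ) ≤ p 1 - 597/2) 0) (pow_nonneg (by linarith : (0:ℝ) ≤ 300 - p 1) 4), mul_nonneg (pow_nonneg (by linarith : (0:ℝ) ≤ p 1 - 597/2) 1) (pow_nonneg (by linarith : (0:ℝ) ≤ 300 - p 1) 3), mul_nonneg (pow_nonneg (by linarith : (0:ℝ) ≤ p 1 - 597/2) 2) (pow_nonneg (by linarith : (0:ℝ) ≤ 300 - p 1) 2), mul_nonneg (pow_nonneg (by linarith : (0:ℝ) ≤ p 1 - 597/2) 3) (pow_nonneg (by linarith : (0:ℝ) ≤ 300 - p 1) 1), mul_nonneg (pow_nonneg (by linarith : (0:ℝ) ≤ p 1 - 597/2) 4) (pow_nonneg (by linarith : (0:ℝ) ≤ 300 - p 1) 0)]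

lemma L4c1_S2 (p : V2) (h0 : p 0 = 160) (hgp : gsq p < 100) (hlo : 246 ≤ p 1) (hhi : p 1 ≤ 565/2) :
    hilbertDist Osq p S2 = 1/2 * Real.log ((((p 1 - 170) - (p 1 - 300)) * (p 1 - 100)) / (-(p 1 - 300) * ((p 1 - 100) - (p 1 - 170)))) := by
  have hden : (0:ℝ) < (p 1 - 170) := by linarith
  have hne : (p 1 - 170) ≠ 0 := ne_of_gt hden
  have htx : ((p 1 - 300) / (p 1 - 170)) < 0 := div_neg_of_neg_of_pos (by linarith) hden
  have hty : 1 < ((p 1 - 100) / (p 1 - 170)) := by rw [lt_div_iff₀ hden]; linarith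
  have htb1x : (-27/38:ℝ) ≤ (p 1 - 300) / (p 1 - 170) := by rw [le_div_iff₀ hden]; linarith
  have htb2x : (p 1 - 300) / (p 1 - 170) ≤ (-7/45:ℝ) := by rw [div_le_iff₀ hden]; linarith
  have hx : gsq (p + ((p 1 - 300) / (p 1 - 170))•(S2 - p)) = 100 := by
    refine hx_top p S2 _ ?_ ?_ ?_
    · rw [S2_1, show (170:ℝ) - p 1 = -(p 1 - 170) from by ring]
      exact fs2 _ _ _ _ hne (by ring)
    · rw [S2_0, h0]; nlinarith [htb1x, htb2x]
    · rw [S2_0, h0]; nlinarith [htb1x, htb2x]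
  have htb1y : (73/45:ℝ) ≤ (p 1 - 100) / (p 1 - 170) := by rw [le_div_iff₀ hden]; linarith
  have htb2y : (p 1 - 100) / (p 1 - 170) ≤ (73/38:ℝ) := by rw [div_le_iff₀ hden]; linarith
  have hy : gsq (p + ((p 1 - 100) / (p 1 - 170))•(S2 - p)) = 100 := by
    refine hx_bottom p S2 _ ?_ ?_ ?_
    · rw [S2_1, show (170:ℝ) - p 1 = -(p 1 - 170) from by ring]
      exact fs2 _ _ _ _ hne (by ring)
    · rw [S2_0, h0]; nlinarith [htb1y, htb2y]
    · rw [S2_0, h0]; nlinarith [htb1y, htb2y]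
  rw [hd_eval p S2 _ _ htx hty hx hy hgp S2_mem]
  rw [ratio_eval _ _ _ hne]

lemma L4c1_S4 (p : V2) (h0 : p 0 = 160) (hgp : gsq p < 100) (hlo : 246 ≤ p 1) (hhi : p 1 ≤ 565/2) :
    hilbertDist Osq p S4 = 1/2 * Real.log (((1 - (-3)) * (300 - p 1)) / (-(-3) * ((300 - p 1) - (285 - p 1)))) := by
  have hden : (0:ℝ) < (285 - p 1) := by linarith
  have hne : (285 - p 1) ≠ 0 := ne_of_gt hden
  have htx : (((-3)) : ℝ) < 0 := by norm_num
  have hty : 1 < ((300 - p 1) / (285 - p 1)) := by rw [lt_div_iff₀ hden]; linarith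
  have hx : gsq (p + (((-3)) : ℝ)•(S4 - p)) = 100 := by
    refine hx_left p S4 _ ?_ ?_ ?_
    · rw [S4_0, h0]; norm_num
    · rw [S4_1]; linarith
    · rw [S4_1]; linarith
  have htb1y : (18/13:ℝ) ≤ (300 - p 1) / (285 - p 1) := by rw [le_div_iff₀ hden]; linarith
  have htb2y : (300 - p 1) / (285 - p 1) ≤ (7:ℝ) := by rw [div_le_iff₀ hden]; linarith
  have hy : gsq (p + ((300 - p 1) / (285 - p 1))•(S4 - p)) = 100 := by
    refine hx_top p S4 _ ?_ ?_ ?_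
    · rw [S4_1, show (285:ℝ) - p 1 = (285 - p 1) from by ring]
      exact fs1 _ _ _ _ hne (by ring)
    · rw [S4_0, h0]; nlinarith [htb1y, htb2y]
    · rw [S4_0, h0]; nlinarith [htb1y, htb2y]
  rw [hd_eval p S4 _ _ htx hty hx hy hgp S4_mem]
  rw [ratio_eval_ty _ _ _ hne]

lemma L4c1 (p : V2) (h0 : p 0 = 160) (hgp : gsq p < 100) (hlo : 246 ≤ p 1) (hhi : p 1 ≤ 565/2) :
    hilbertDist Osq p S4 ≤ hilbertDist Osq p S2 := by
  rw [L4c1_S2 p h0 hgp hlo hhi, L4c1_S4 p h0 hgp hlo hhi]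
  apply mul_le_mul_of_nonneg_left _ (by norm_num : (0:ℝ) ≤ 1/2)
  apply Real.log_le_log
  · exact div_pos (mul_pos (by linarith : (0:ℝ) < (1 - (-3))) (by linarith : (0:ℝ) < (300 - p 1))) (mul_pos (by linarith : (0:ℝ) < -(-3)) (by linarith : (0:ℝ) < ((300 - p 1) - (285 - p 1))))
  · rw [div_le_div_iff₀ (mul_pos (by linarith : (0:ℝ) < -(-3)) (by linarith : (0:ℝ) < ((300 - p 1) - (285 - p 1)))) (mul_pos (by linarith : (0:ℝ) < -(p 1 - 300)) (by linarith : (0:ℝ) < ((p 1 - 100) - (p 1 - 170))))]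
    nlinarith [mul_nonneg (pow_nonneg (by linarith : (0:ℝ) ≤ p 1 - 246) 0) (pow_nonneg (by linarith : (0:ℝ) ≤ 565/2 - p 1) 4), mul_nonneg (pow_nonneg (by linarith : (0:ℝ) ≤ p 1 - 246) 1) (pow_nonneg (by linarith : (0:ℝ) ≤ 565/2 - p 1) 3), mul_nonneg (pow_nonneg (by linarith : (0:ℝ) ≤ p 1 - 246) 2) (pow_nonneg (by linarith : (0:ℝ) ≤ 565/2 - p 1) 2), mul_nonneg (pow_nonneg (by linarith : (0:ℝ) ≤ p 1 - 246) 3) (pow_nonneg (by linarith : (0:ℝ) ≤ 565/2 - p 1) 1), mul_nonneg (pow_nonneg (by linarith : (0:ℝ) ≤ p 1 - 246) 4) (pow_nonneg (by linarith : (0:ℝ) ≤ 565/2 - p 1) 0)]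

lemma L4c2_S2 (p : V2) (h0 : p 0 = 160) (hgp : gsq p < 100) (hlo : 565/2 ≤ p 1) (hhi : p 1 ≤ 1155/4) :
    hilbertDist Osq p S2 = 1/2 * Real.log ((((p 1 - 170) - (p 1 - 300)) * (p 1 - 100)) / (-(p 1 - 300) * ((p 1 - 100) - (p 1 - 170)))) := by
  have hden : (0:ℝ) < (p 1 - 170) := by linarith
  have hne : (p 1 - 170) ≠ 0 := ne_of_gt hden
  have htx : ((p 1 - 300) / (p 1 - 170)) < 0 := div_neg_of_neg_of_pos (by linarith) hden
  have hty : 1 < ((p 1 - 100) / (p 1 - 170)) := by rw [lt_div_iff₀ hden]; linarith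
  have htb1x : (-7/45:ℝ) ≤ (p 1 - 300) / (p 1 - 170) := by rw [le_div_iff₀ hden]; linarith
  have htb2x : (p 1 - 300) / (p 1 - 170) ≤ (-9/95:ℝ) := by rw [div_le_iff₀ hden]; linarith
  have hx : gsq (p + ((p 1 - 300) / (p 1 - 170))•(S2 - p)) = 100 := by
    refine hx_top p S2 _ ?_ ?_ ?_
    · rw [S2_1, show (170:ℝ) - p 1 = -(p 1 - 170) from by ring]
      exact fs2 _ _ _ _ hne (by ring)
    · rw [S2_0, h0]; nlinarith [htb1x, htb2x]
    · rw [S2_0, h0]; nlinarith [htb1x, htb2x]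
  have htb1y : (151/95:ℝ) ≤ (p 1 - 100) / (p 1 - 170) := by rw [le_div_iff₀ hden]; linarith
  have htb2y : (p 1 - 100) / (p 1 - 170) ≤ (73/45:ℝ) := by rw [div_le_iff₀ hden]; linarith
  have hy : gsq (p + ((p 1 - 100) / (p 1 - 170))•(S2 - p)) = 100 := by
    refine hx_bottom p S2 _ ?_ ?_ ?_
    · rw [S2_1, show (170:ℝ) - p 1 = -(p 1 - 170) from by ring]
      exact fs2 _ _ _ _ hne (by ring)
    · rw [S2_0, h0]; nlinarith [htb1y, htb2y]
    · rw [S2_0, h0]; nlinarith [htb1y, htb2y]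
  rw [hd_eval p S2 _ _ htx hty hx hy hgp S2_mem]
  rw [ratio_eval _ _ _ hne]

lemma L4c2_S4 (p : V2) (h0 : p 0 = 160) (hgp : gsq p < 100) (hlo : 565/2 ≤ p 1) (hhi : p 1 ≤ 1155/4) :
    hilbertDist Osq p S4 = 1/2 * Real.log (((1 - (-3)) * 7) / (-(-3) * (7 - 1))) := by
  have htx : (((-3)) : ℝ) < 0 := by norm_num
  have hty : (1:ℝ) < ((7) : ℝ) := by norm_num
  have hx : gsq (p + (((-3)) : ℝ)•(S4 - p)) = 100 := by
    refine hx_left p S4 _ ?_ ?_ ?_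
    · rw [S4_0, h0]; norm_num
    · rw [S4_1]; linarith
    · rw [S4_1]; linarith
  have hy : gsq (p + ((7) : ℝ)•(S4 - p)) = 100 := by
    refine hx_right p S4 _ ?_ ?_ ?_
    · rw [S4_0, h0]; norm_num
    · rw [S4_1]; linarith
    · rw [S4_1]; linarith
  rw [hd_eval p S4 _ _ htx hty hx hy hgp S4_mem]

lemma L4c2 (p : V2) (h0 : p 0 = 160) (hgp : gsq p < 100) (hlo : 565/2 ≤ p 1) (hhi : p 1 ≤ 1155/4) :
    hilbertDist Osq p S4 ≤ hilbertDist Osq p S2 := by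
  rw [L4c2_S2 p h0 hgp hlo hhi, L4c2_S4 p h0 hgp hlo hhi]
  apply mul_le_mul_of_nonneg_left _ (by norm_num : (0:ℝ) ≤ 1/2)
  apply Real.log_le_log
  · exact div_pos (mul_pos (by linarith : (0:ℝ) < (1 - (-3))) (by linarith : (0:ℝ) < 7)) (mul_pos (by linarith : (0:ℝ) < -(-3)) (by linarith : (0:ℝ) < (7 - 1)))
  · rw [div_le_div_iff₀ (mul_pos (by linarith : (0:ℝ) < -(-3)) (by linarith : (0:ℝ) < (7 - 1))) (mul_pos (by linarith : (0:ℝ) < -(p 1 - 300)) (by linarith : (0:ℝ) < ((p 1 - 100) - (p 1 - 170))))]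
    nlinarith [mul_nonneg (pow_nonneg (by linarith : (0:ℝ) ≤ p 1 - 565/2) 0) (pow_nonneg (by linarith : (0:ℝ) ≤ 1155/4 - p 1) 4), mul_nonneg (pow_nonneg (by linarith : (0:ℝ) ≤ p 1 - 565/2) 1) (pow_nonneg (by linarith : (0:ℝ) ≤ 1155/4 - p 1) 3), mul_nonneg (pow_nonneg (by linarith : (0:ℝ) ≤ p 1 - 565/2) 2) (pow_nonneg (by linarith : (0:ℝ) ≤ 1155/4 - p 1) 2), mul_nonneg (pow_nonneg (by linarith : (0:ℝ) ≤ p 1 - 565/2) 3) (pow_nonneg (by linarith : (0:ℝ) ≤ 1155/4 - p 1) 1), mul_nonneg (pow_nonneg (by linarith : (0:ℝ) ≤ p 1 - 565/2) 4) (pow_nonneg (by linarith : (0:ℝ) ≤ 1155/4 - p 1) 0)]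

lemma L4c3_S2 (p : V2) (h0 : p 0 = 160) (hgp : gsq p < 100) (hlo : 1155/4 ≤ p 1) (hhi : p 1 < 300) :
    hilbertDist Osq p S2 = 1/2 * Real.log ((((p 1 - 170) - (p 1 - 300)) * (p 1 - 100)) / (-(p 1 - 300) * ((p 1 - 100) - (p 1 - 170)))) := by
  have hden : (0:ℝ) < (p 1 - 170) := by linarith
  have hne : (p 1 - 170) ≠ 0 := ne_of_gt hden
  have htx : ((p 1 - 300) / (p 1 - 170)) < 0 := div_neg_of_neg_of_pos (by linarith) hden
  have hty : 1 < ((p 1 - 100) / (p 1 - 170)) := by rw [lt_div_iff₀ hden]; linarith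
  have htb1x : (-9/95:ℝ) ≤ (p 1 - 300) / (p 1 - 170) := by rw [le_div_iff₀ hden]; linarith
  have htb2x : (p 1 - 300) / (p 1 - 170) ≤ (0:ℝ) := by rw [div_le_iff₀ hden]; linarith
  have hx : gsq (p + ((p 1 - 300) / (p 1 - 170))•(S2 - p)) = 100 := by
    refine hx_top p S2 _ ?_ ?_ ?_
    · rw [S2_1, show (170:ℝ) - p 1 = -(p 1 - 170) from by ring]
      exact fs2 _ _ _ _ hne (by ring)
    · rw [S2_0, h0]; nlinarith [htb1x, htb2x]
    · rw [S2_0, h0]; nlinarith [htb1x, htb2x]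
  have htb1y : (20/13:ℝ) ≤ (p 1 - 100) / (p 1 - 170) := by rw [le_div_iff₀ hden]; linarith
  have htb2y : (p 1 - 100) / (p 1 - 170) ≤ (151/95:ℝ) := by rw [div_le_iff₀ hden]; linarith
  have hy : gsq (p + ((p 1 - 100) / (p 1 - 170))•(S2 - p)) = 100 := by
    refine hx_bottom p S2 _ ?_ ?_ ?_
    · rw [S2_1, show (170:ℝ) - p 1 = -(p 1 - 170) from by ring]
      exact fs2 _ _ _ _ hne (by ring)
    · rw [S2_0, h0]; nlinarith [htb1y, htb2y]
    · rw [S2_0, h0]; nlinarith [htb1y, htb2y]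
  rw [hd_eval p S2 _ _ htx hty hx hy hgp S2_mem]
  rw [ratio_eval _ _ _ hne]

lemma L4c3_S4 (p : V2) (h0 : p 0 = 160) (hgp : gsq p < 100) (hlo : 1155/4 ≤ p 1) (hhi : p 1 < 300) :
    hilbertDist Osq p S4 = 1/2 * Real.log ((((p 1 - 285) - (p 1 - 300)) * 7) / (-(p 1 - 300) * (7 - 1))) := by
  have hden : (0:ℝ) < (p 1 - 285) := by linarith
  have hne : (p 1 - 285) ≠ 0 := ne_of_gt hden
  have htx : ((p 1 - 300) / (p 1 - 285)) < 0 := div_neg_of_neg_of_pos (by linarith) hden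
  have hty : (1:ℝ) < ((7) : ℝ) := by norm_num
  have htb1x : (-3:ℝ) ≤ (p 1 - 300) / (p 1 - 285) := by rw [le_div_iff₀ hden]; linarith
  have htb2x : (p 1 - 300) / (p 1 - 285) ≤ (0:ℝ) := by rw [div_le_iff₀ hden]; linarith
  have hx : gsq (p + ((p 1 - 300) / (p 1 - 285))•(S4 - p)) = 100 := by
    refine hx_top p S4 _ ?_ ?_ ?_
    · rw [S4_1, show (285:ℝ) - p 1 = -(p 1 - 285) from by ring]
      exact fs2 _ _ _ _ hne (by ring)
    · rw [S4_0, h0]; nlinarith [htb1x, htb2x]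
    · rw [S4_0, h0]; nlinarith [htb1x, htb2x]
  have hy : gsq (p + ((7) : ℝ)•(S4 - p)) = 100 := by
    refine hx_right p S4 _ ?_ ?_ ?_
    · rw [S4_0, h0]; norm_num
    · rw [S4_1]; linarith
    · rw [S4_1]; linarith
  rw [hd_eval p S4 _ _ htx hty hx hy hgp S4_mem]
  rw [ratio_eval_tx _ _ _ hne]

lemma L4c3 (p : V2) (h0 : p 0 = 160) (hgp : gsq p < 100) (hlo : 1155/4 ≤ p 1) (hhi : p 1 < 300) :
    hilbertDist Osq p S4 ≤ hilbertDist Osq p S2 := by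
  rw [L4c3_S2 p h0 hgp hlo hhi, L4c3_S4 p h0 hgp hlo hhi]
  apply mul_le_mul_of_nonneg_left _ (by norm_num : (0:ℝ) ≤ 1/2)
  apply Real.log_le_log
  · exact div_pos (mul_pos (by linarith : (0:ℝ) < ((p 1 - 285) - (p 1 - 300))) (by linarith : (0:ℝ) < 7)) (mul_pos (by linarith : (0:ℝ) < -(p 1 - 300)) (by linarith : (0:ℝ) < (7 - 1)))
  · rw [div_le_div_iff₀ (mul_pos (by linarith : (0:ℝ) < -(p 1 - 300)) (by linarith : (0:ℝ) < (7 - 1))) (mul_pos (by linarith : (0:ℝ) < -(p 1 - 300)) (by linarith : (0:ℝ) < ((p 1 - 100) - (p 1 - 170))))]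
    nlinarith [mul_nonneg (pow_nonneg (by linarith : (0:ℝ) ≤ p 1 - 1155/4) 0) (pow_nonneg (by linarith : (0:ℝ) ≤ 300 - p 1) 4), mul_nonneg (pow_nonneg (by linarith : (0:ℝ) ≤ p 1 - 1155/4) 1) (pow_nonneg (by linarith : (0:ℝ) ≤ 300 - p 1) 3), mul_nonneg (pow_nonneg (by linarith : (0:ℝ) ≤ p 1 - 1155/4) 2) (pow_nonneg (by linarith : (0:ℝ) ≤ 300 - p 1) 2), mul_nonneg (pow_nonneg (by linarith : (0:ℝ) ≤ p 1 - 1155/4) 3) (pow_nonneg (by linarith : (0:ℝ) ≤ 300 - p 1) 1), mul_nonneg (pow_nonneg (by linarith : (0:ℝ) ≤ p 1 - 1155/4) 4) (pow_nonneg (by linarith : (0:ℝ) ≤ 300 - p 1) 0)]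

def PA : V2 := Pt 196 232
lemma PA_O : PA ∈ Osq := by refine ⟨?_, ?_, ?_, ?_⟩ <;> norm_num [PA, Pt, Osq]
lemma PA_g : gsq PA < 100 := mem_Osq.mp PA_O
lemma PA_e1 : hilbertDist Osq PA S1 = 1/2 * Real.log (31433/4983) := by
  have hx : gsq (PA + ((-1320/529):ℝ)•(S1 - PA)) = 100 := by
    refine hx_bottom PA S1 _ ?_ ?_ ?_ <;> norm_num [PA, S1, Pt]
  have hy : gsq (PA + ((680/529):ℝ)•(S1 - PA)) = 100 := by
    refine hx_top PA S1 _ ?_ ?_ ?_ <;> norm_num [PA, S1, Pt]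
  rw [hd_eval PA S1 _ _ (by norm_num) (by norm_num) hx hy PA_g S1_mem]
  norm_num
lemma PA_e2 : hilbertDist Osq PA S2 = 1/2 * Real.log (78/17) := by
  have hx : gsq (PA + ((-34/31):ℝ)•(S2 - PA)) = 100 := by
    refine hx_top PA S2 _ ?_ ?_ ?_ <;> norm_num [PA, S2, Pt]
  have hy : gsq (PA + ((12/7):ℝ)•(S2 - PA)) = 100 := by
    refine hx_left PA S2 _ ?_ ?_ ?_ <;> norm_num [PA, S2, Pt]
  rw [hd_eval PA S2 _ _ (by norm_num) (by norm_num) hx hy PA_g S2_mem]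
  norm_num
lemma PA_e3 : hilbertDist Osq PA S3 = 1/2 * Real.log (108/17) := by
  have hx : gsq (PA + ((-68/67):ℝ)•(S3 - PA)) = 100 := by
    refine hx_top PA S3 _ ?_ ?_ ?_ <;> norm_num [PA, S3, Pt]
  have hy : gsq (PA + ((16/11):ℝ)•(S3 - PA)) = 100 := by
    refine hx_left PA S3 _ ?_ ?_ ?_ <;> norm_num [PA, S3, Pt]
  rw [hd_eval PA S3 _ _ (by norm_num) (by norm_num) hx hy PA_g S3_mem]
  norm_num
lemma PA_e4 : hilbertDist Osq PA S4 = 1/2 * Real.log (629/99) := by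
  have hx : gsq (PA + ((-132/53):ℝ)•(S4 - PA)) = 100 := by
    refine hx_bottom PA S4 _ ?_ ?_ ?_ <;> norm_num [PA, S4, Pt]
  have hy : gsq (PA + ((68/53):ℝ)•(S4 - PA)) = 100 := by
    refine hx_top PA S4 _ ?_ ?_ ?_ <;> norm_num [PA, S4, Pt]
  rw [hd_eval PA S4 _ _ (by norm_num) (by norm_num) hx hy PA_g S4_mem]
  norm_num
lemma PA_c13 : hilbertDist Osq PA S1 < hilbertDist Osq PA S3 := by
  rw [PA_e1, PA_e3]
  exact mul_lt_mul_of_pos_left (Real.log_lt_log (by norm_num) (by norm_num)) (by norm_num)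
lemma PA_c14 : hilbertDist Osq PA S1 < hilbertDist Osq PA S4 := by
  rw [PA_e1, PA_e4]
  exact mul_lt_mul_of_pos_left (Real.log_lt_log (by norm_num) (by norm_num)) (by norm_num)
lemma PA_c23 : hilbertDist Osq PA S2 < hilbertDist Osq PA S3 := by
  rw [PA_e2, PA_e3]
  exact mul_lt_mul_of_pos_left (Real.log_lt_log (by norm_num) (by norm_num)) (by norm_num)
lemma PA_c24 : hilbertDist Osq PA S2 < hilbertDist Osq PA S4 := by
  rw [PA_e2, PA_e4]
  exact mul_lt_mul_of_pos_left (Real.log_lt_log (by norm_num) (by norm_num)) (by norm_num)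

def PB : V2 := Pt 101 297
lemma PB_O : PB ∈ Osq := by refine ⟨?_, ?_, ?_, ?_⟩ <;> norm_num [PB, Pt, Osq]
lemma PB_g : gsq PB < 100 := mem_Osq.mp PB_O
lemma PB_e1 : hilbertDist Osq PB S1 = 1/2 * Real.log (597/7) := by
  have hx : gsq (PB + ((-1/59):ℝ)•(S1 - PB)) = 100 := by
    refine hx_left PB S1 _ ?_ ?_ ?_ <;> norm_num [PB, S1, Pt]
  have hy : gsq (PB + ((199/59):ℝ)•(S1 - PB)) = 100 := by
    refine hx_right PB S1 _ ?_ ?_ ?_ <;> norm_num [PB, S1, Pt]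
  rw [hd_eval PB S1 _ _ (by norm_num) (by norm_num) hx hy PB_g S1_mem]
  norm_num
lemma PB_e2 : hilbertDist Osq PB S2 = 1/2 * Real.log (2561/21) := by
  have hx : gsq (PB + ((-3/127):ℝ)•(S2 - PB)) = 100 := by
    refine hx_top PB S2 _ ?_ ?_ ?_ <;> norm_num [PB, S2, Pt]
  have hy : gsq (PB + ((197/127):ℝ)•(S2 - PB)) = 100 := by
    refine hx_bottom PB S2 _ ?_ ?_ ?_ <;> norm_num [PB, S2, Pt]
  rw [hd_eval PB S2 _ _ (by norm_num) (by norm_num) hx hy PB_g S2_mem]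
  norm_num
lemma PB_e3 : hilbertDist Osq PB S3 = 1/2 * Real.log (1773/13) := by
  have hx : gsq (PB + ((-1/44):ℝ)•(S3 - PB)) = 100 := by
    refine hx_top PB S3 _ ?_ ?_ ?_ <;> norm_num [PB, S3, Pt]
  have hy : gsq (PB + ((197/132):ℝ)•(S3 - PB)) = 100 := by
    refine hx_bottom PB S3 _ ?_ ?_ ?_ <;> norm_num [PB, S3, Pt]
  rw [hd_eval PB S3 _ _ (by norm_num) (by norm_num) hx hy PB_g S3_mem]
  norm_num
lemma PB_e4 : hilbertDist Osq PB S4 = 1/2 * Real.log (398/3) := by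
  have hx : gsq (PB + ((-1/79):ℝ)•(S4 - PB)) = 100 := by
    refine hx_left PB S4 _ ?_ ?_ ?_ <;> norm_num [PB, S4, Pt]
  have hy : gsq (PB + ((199/79):ℝ)•(S4 - PB)) = 100 := by
    refine hx_right PB S4 _ ?_ ?_ ?_ <;> norm_num [PB, S4, Pt]
  rw [hd_eval PB S4 _ _ (by norm_num) (by norm_num) hx hy PB_g S4_mem]
  norm_num
lemma PB_c13 : hilbertDist Osq PB S1 < hilbertDist Osq PB S3 := by
  rw [PB_e1, PB_e3]
  exact mul_lt_mul_of_pos_left (Real.log_lt_log (by norm_num) (by norm_num)) (by norm_num)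
lemma PB_c14 : hilbertDist Osq PB S1 < hilbertDist Osq PB S4 := by
  rw [PB_e1, PB_e4]
  exact mul_lt_mul_of_pos_left (Real.log_lt_log (by norm_num) (by norm_num)) (by norm_num)
lemma PB_c23 : hilbertDist Osq PB S2 < hilbertDist Osq PB S3 := by
  rw [PB_e2, PB_e3]
  exact mul_lt_mul_of_pos_left (Real.log_lt_log (by norm_num) (by norm_num)) (by norm_num)
lemma PB_c24 : hilbertDist Osq PB S2 < hilbertDist Osq PB S4 := by
  rw [PB_e2, PB_e4]
  exact mul_lt_mul_of_pos_left (Real.log_lt_log (by norm_num) (by norm_num)) (by norm_num)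


lemma sliceL1 (p : V2) (h0 : p 0 = 115) (hOm : p ∈ Osq) (hy : p 1 ≤ 264) :
    hilbertDist Osq p S3 ≤ hilbertDist Osq p S1 := by
  have hgp := mem_Osq.mp hOm
  have h100 : 100 < p 1 := hOm.2.2.1
  rcases le_total (p 1) (265/2) with h|h
  · exact L1c1 p h0 hgp h100 h
  rcases le_total (p 1) (5849/40) with h2|h2
  · exact L1c2 p h0 hgp h h2
  rcases le_total (p 1) (5205/34) with h3|h3
  · exact L1c3 p h0 hgp h2 h3
  rcases le_total (p 1) (5805/34) with h4|h4
  · exact L1c4 p h0 hgp h3 h4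
  rcases le_total (p 1) (465/2) with h5|h5
  · exact L1c5 p h0 hgp h4 h5
  · exact L1c6 p h0 hgp h5 hy

lemma sliceL2 (p : V2) (h0 : p 0 = 108) (hOm : p ∈ Osq) (hy : 280 ≤ p 1) :
    hilbertDist Osq p S4 ≤ hilbertDist Osq p S2 := by
  have hgp := mem_Osq.mp hOm
  have h300 : p 1 < 300 := hOm.2.2.2
  rcases le_total (p 1) (597/2) with h|h
  · exact L2c1 p h0 hgp hy h
  · exact L2c2 p h0 hgp h h300

lemma sliceL4 (p : V2) (h0 : p 0 = 160) (hOm : p ∈ Osq) (hy : 246 ≤ p 1) :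
    hilbertDist Osq p S4 ≤ hilbertDist Osq p S2 := by
  have hgp := mem_Osq.mp hOm
  have h300 : p 1 < 300 := hOm.2.2.2
  rcases le_total (p 1) (565/2) with h|h
  · exact L4c1 p h0 hgp hy h
  rcases le_total (p 1) (1155/4) with h2|h2
  · exact L4c2 p h0 hgp h h2
  · exact L4c3 p h0 hgp h2 h300


open Classical in
/-- The paper's configuration: in the square `(100,300)²` with the Hilbert metric,
the second-order Voronoi cell of the pair `{s₁, s₂}` is not star-shaped. -/
theorem secondOrder_cell_not_starShaped :
    let pt : ℝ → ℝ → V2 := fun a b => (WithLp.equiv 2 (Fin 2 → ℝ)).symm ![a, b]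
    let Ω : Set V2 := {x | 100 < x 0 ∧ x 0 < 300 ∧ 100 < x 1 ∧ x 1 < 300}
    let s₁ := pt 160 284.9
    let s₂ := pt 140 170
    let s₃ := pt 130 165
    let s₄ := pt 180 285
    let C : Set V2 := {p ∈ Ω | ∀ t ∈ ({s₁, s₂} : Set V2), ∀ s ∈ ({s₃, s₄} : Set V2),
      hilbertDist Ω p t < hilbertDist Ω p s}
    ¬ ∃ z ∈ C, ∀ p ∈ C, segment ℝ z p ⊆ C := by
  intro pt Ω s₁ s₂ s₃ s₄ C
  rintro ⟨z, hz, hstar⟩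
  have hC : ∀ w : V2, w ∈ C ↔ (w ∈ Osq ∧ ∀ t ∈ ({S1, S2} : Set V2), ∀ s ∈ ({S3, S4} : Set V2),
      hilbertDist Osq w t < hilbertDist Osq w s) := fun w => Iff.rfl
  have hmemA : PA ∈ C := by
    rw [hC]
    refine ⟨PA_O, ?_⟩
    intro t ht s hs
    rcases Set.mem_insert_iff.mp ht with rfl | ht2
    · rcases Set.mem_insert_iff.mp hs with rfl | hs2
      · exact PA_c13
      · rw [Set.mem_singleton_iff.mp hs2]; exact PA_c14
    · rw [Set.mem_singleton_iff.mp ht2]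
      rcases Set.mem_insert_iff.mp hs with rfl | hs2
      · exact PA_c23
      · rw [Set.mem_singleton_iff.mp hs2]; exact PA_c24
  have hmemB : PB ∈ C := by
    rw [hC]
    refine ⟨PB_O, ?_⟩
    intro t ht s hs
    rcases Set.mem_insert_iff.mp ht with rfl | ht2
    · rcases Set.mem_insert_iff.mp hs with rfl | hs2
      · exact PB_c13
      · rw [Set.mem_singleton_iff.mp hs2]; exact PB_c14
    · rw [Set.mem_singleton_iff.mp ht2]
      rcases Set.mem_insert_iff.mp hs with rfl | hs2
      · exact PB_c23
      · rw [Set.mem_singleton_iff.mp hs2]; exact PB_c24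
  have hex : ∀ w : V2, w ∈ C → w ∈ Osq ∧ hilbertDist Osq w S1 < hilbertDist Osq w S3 ∧
      hilbertDist Osq w S2 < hilbertDist Osq w S4 := by
    intro w hw
    have h := (hC w).mp hw
    exact ⟨h.1, h.2 S1 (Set.mem_insert _ _) S3 (Set.mem_insert _ _),
           h.2 S2 (Set.mem_insert_iff.mpr (Or.inr rfl)) S4 (Set.mem_insert_iff.mpr (Or.inr rfl))⟩
  have hzO : z ∈ Osq := (hex z hz).1
  obtain ⟨hz1, hz2, hz3, hz4⟩ := hzO
  rcases le_total (z 0) 115 with hside | hside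
  · -- left case: shoot toward PA = (196, 232)
    have hsegA := hstar PA hmemA
    have hden : (0:ℝ) < 196 - z 0 := by linarith
    have hne : (196 - z 0) ≠ 0 := ne_of_gt hden
    set t : ℝ := (115 - z 0)/(196 - z 0) with hts
    have ht0 : 0 ≤ t := div_nonneg (by linarith) hden.le
    have ht1 : t ≤ 1 := by rw [hts, div_le_one hden]; linarith
    set u : V2 := (1-t)•z + t•PA with hus
    have huC : u ∈ C := hsegA ⟨1-t, t, by linarith, ht0, by ring, rfl⟩
    have hu0 : u 0 = 115 := by
      rw [hus, comb2_apply, show PA 0 = 196 from rfl, hts]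
      field_simp
      ring
    have hu1 : 264 < u 1 := by
      by_contra hcon; push_neg at hcon
      have := sliceL1 u hu0 (hex u huC).1 hcon
      linarith [(hex u huC).2.1]
    set r : ℝ := (160 - z 0)/(196 - z 0) with hrs
    have hr0 : 0 ≤ r := div_nonneg (by linarith) hden.le
    have hr1 : r ≤ 1 := by rw [hrs, div_le_one hden]; linarith
    set w : V2 := (1-r)•z + r•PA with hws
    have hwC : w ∈ C := hsegA ⟨1-r, r, by linarith, hr0, by ring, rfl⟩
    have hw0 : w 0 = 160 := by
      rw [hws, comb2_apply, show PA 0 = 196 from rfl, hrs]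
      field_simp
      ring
    have hw1 : w 1 < 246 := by
      by_contra hcon; push_neg at hcon
      have := sliceL4 w hw0 (hex w hwC).1 hcon
      linarith [(hex w hwC).2.2]
    have h9r : 9*r = 5 + 4*t := by
      rw [hrs, hts]
      field_simp
      ring
    have hu1e : u 1 = (1-t)*(z 1) + t*232 := by
      rw [hus, comb2_apply, show PA 1 = 232 from rfl]
    have hw1e : w 1 = (1-r)*(z 1) + r*232 := by
      rw [hws, comb2_apply, show PA 1 = 232 from rfl]
    have hkey : 9*(w 1) = 4*(u 1) + 1160 := by
      rw [hu1e, hw1e]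
      linear_combination (232 - z 1) * h9r
    linarith
  · -- right case: shoot toward PB = (101, 297)
    have hsegB := hstar PB hmemB
    have hden : (0:ℝ) < z 0 - 101 := by linarith
    have hne : (z 0 - 101) ≠ 0 := ne_of_gt hden
    set t : ℝ := (z 0 - 115)/(z 0 - 101) with hts
    have ht0 : 0 ≤ t := div_nonneg (by linarith) hden.le
    have ht1 : t ≤ 1 := by rw [hts, div_le_one hden]; linarith
    set u : V2 := (1-t)•z + t•PB with hus
    have huC : u ∈ C := hsegB ⟨1-t, t, by linarith, ht0, by ring, rfl⟩
    have hu0 : u 0 = 115 := by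
      rw [hus, comb2_apply, show PB 0 = 101 from rfl, hts]
      field_simp
      ring
    have hu1 : 264 < u 1 := by
      by_contra hcon; push_neg at hcon
      have := sliceL1 u hu0 (hex u huC).1 hcon
      linarith [(hex u huC).2.1]
    set r : ℝ := (z 0 - 108)/(z 0 - 101) with hrs
    have hr0 : 0 ≤ r := div_nonneg (by linarith) hden.le
    have hr1 : r ≤ 1 := by rw [hrs, div_le_one hden]; linarith
    set w : V2 := (1-r)•z + r•PB with hws
    have hwC : w ∈ C := hsegB ⟨1-r, r, by linarith, hr0, by ring, rfl⟩
    have hw0 : w 0 = 108 := by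
      rw [hws, comb2_apply, show PB 0 = 101 from rfl, hrs]
      field_simp
      ring
    have hw1 : w 1 < 280 := by
      by_contra hcon; push_neg at hcon
      have := sliceL2 w hw0 (hex w hwC).1 hcon
      linarith [(hex w hwC).2.2]
    have h2r : 2*r = 1 + t := by
      rw [hrs, hts]
      field_simp
      ring
    have hu1e : u 1 = (1-t)*(z 1) + t*297 := by
      rw [hus, comb2_apply, show PB 1 = 297 from rfl]
    have hw1e : w 1 = (1-r)*(z 1) + r*297 := by
      rw [hws, comb2_apply, show PB 1 = 297 from rfl]
    have hkey : 2*(w 1) = u 1 + 297 := by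
      rw [hu1e, hw1e]
      linear_combination (297 - z 1) * h2r
    linarith
end
end

section
/- For two distinct sites p, q in an open bounded convex Ω with Hilbert metric, the bisector {x ∈ Ω : d_Ω(x,p) = d_Ω(x,q)} is a closed subset of Ω that separates p from q: p and q lie in different connected components of its complement in Ω. -/
noncomputable section
open Classical

/-
Measured with the gauge `g` of `Ω` centred at `p`, the chord through `x` and `p` meets `∂Ω`
at `p + g (x - p)⁻¹ • (x - p)` and `p + g (p - x)⁻¹ • (p - x)`, so the cross ratio collapses
to `d(x, p) = ½ log ((1 + g (p - x)) / (1 - g (x - p)))`. The gauge of a convex neighbourhood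
of `0` is continuous, hence so is `d(·, p)` on `Ω`, and the bisector is closed. On a connected
set containing `p` and `q`, the function `d(·, p) - d(·, q)`, negative at `p` and positive at
`q`, vanishes somewhere by the intermediate value theorem, so no such set avoids the bisector.
-/

open Set Topology

theorem connectedComponentIn_diff_setOf_eq_ne {X α : Type*} [TopologicalSpace X] [LinearOrder α]
    [TopologicalSpace α] [OrderClosedTopology α] {s : Set X} {f g : X → α}
    (hf : ContinuousOn f s) (hg : ContinuousOn g s) {a b : X} (ha : a ∈ s) (hb : b ∈ s)
    (hfa : f a < g a) (hgb : g b < f b) :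
    connectedComponentIn (s \ {x | f x = g x}) a ≠
      connectedComponentIn (s \ {x | f x = g x}) b := by
  intro h
  have ha' : a ∈ connectedComponentIn (s \ {x | f x = g x}) a :=
    mem_connectedComponentIn ⟨ha, hfa.ne⟩
  have hb' : b ∈ connectedComponentIn (s \ {x | f x = g x}) a :=
    h ▸ mem_connectedComponentIn ⟨hb, hgb.ne'⟩
  have hsub : connectedComponentIn (s \ {x | f x = g x}) a ⊆ s :=
    (connectedComponentIn_subset _ _).trans sdiff_subset
  obtain ⟨x, hx, hfgx⟩ := isPreconnected_connectedComponentIn.intermediate_value₂ ha' hb'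
    (hf.mono hsub) (hg.mono hsub) hfa.le hgb.le
  exact (connectedComponentIn_subset _ _ hx).2 hfgx

theorem exists_pos_sub_eq_smul_of_mem_openSegment {E : Type*} [AddCommGroup E] [Module ℝ E]
    {u w z : E} (h : z ∈ openSegment ℝ u w) : ∃ c : ℝ, 0 < c ∧ w - z = c • (z - u) := by
  obtain ⟨a, b, ha, hb, hab, rfl⟩ := h
  refine ⟨a / b, div_pos ha hb, ?_⟩
  obtain rfl : a = 1 - b := by linarith
  match_scalars <;> field_simp
  ring

theorem dist_add_smul_add_smul {E : Type*} [SeminormedAddCommGroup E] [NormedSpace ℝ E]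
    (p w : E) (a b : ℝ) : dist (p + a • w) (p + b • w) = |a - b| * ‖w‖ := by
  rw [dist_add_left, dist_eq_norm, ← sub_smul, norm_smul, Real.norm_eq_abs]

theorem preimage_add_left_mem_nhds_zero {G : Type*} [TopologicalSpace G] [AddZeroClass G]
    [ContinuousAdd G] {s : Set G} {p : G} (hs : IsOpen s) (hp : p ∈ s) :
    (p + ·) ⁻¹' s ∈ 𝓝 0 :=
  (hs.preimage (continuous_const_add p)).mem_nhds (by rwa [mem_preimage, add_zero])

section GaugeAt

variable {E : Type*} [NormedAddCommGroup E] [NormedSpace ℝ E] {s : Set E} {p v : E}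

def gaugeAt (s : Set E) (p : E) : E → ℝ := gauge ((p + ·) ⁻¹' s)

theorem continuous_gaugeAt (hs : IsOpen s) (hc : Convex ℝ s) (hp : p ∈ s) :
    Continuous (gaugeAt s p) :=
  continuous_gauge (hc.translate_preimage_right p) (preimage_add_left_mem_nhds_zero hs hp)

theorem gaugeAt_lt_one (hs : IsOpen s) (hv : p + v ∈ s) : gaugeAt s p v < 1 :=
  gauge_lt_one_of_mem_of_isOpen (hs.preimage (continuous_const_add p)) hv

theorem gaugeAt_pos (hs : IsOpen s) (hb : Bornology.IsBounded s) (hp : p ∈ s) (hv : v ≠ 0) :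
    0 < gaugeAt s p v :=
  (gauge_pos (absorbent_nhds_zero (preimage_add_left_mem_nhds_zero hs hp))
    (NormedSpace.isVonNBounded_of_isBounded _
      ((isometry_add_left p).antilipschitz.isBounded_preimage hb))).2 hv

theorem add_smul_mem_frontier_iff_s15 (hs : IsOpen s) (hc : Convex ℝ s) (hp : p ∈ s) {r : ℝ}
    (hr : 0 < r) : p + r • v ∈ frontier s ↔ r * gaugeAt s p v = 1 := by
  change r • v ∈ Homeomorph.addLeft p ⁻¹' frontier s ↔ _
  rw [Homeomorph.preimage_frontier, Homeomorph.coe_addLeft, ← gauge_eq_one_iff_mem_frontier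
    (hc.translate_preimage_right p) (preimage_add_left_mem_nhds_zero hs hp),
    gauge_smul_of_nonneg hr.le, smul_eq_mul]
  rfl

theorem exists_chord_endpoints (hs : IsOpen s) (hb : Bornology.IsBounded s) (hc : Convex ℝ s)
    {x : E} (hx : x ∈ s) (hp : p ∈ s) (hxp : x ≠ p) :
    ∃ X Y : E, X ∈ frontier s ∧ Y ∈ frontier s ∧
      x ∈ openSegment ℝ X p ∧ p ∈ openSegment ℝ x Y := by
  set α := gaugeAt s p (x - p)
  set β := gaugeAt s p (p - x)
  have hα : 0 < α := gaugeAt_pos hs hb hp (sub_ne_zero.2 hxp)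
  have hα₁ : α < 1 := gaugeAt_lt_one hs (by rwa [add_sub_cancel])
  have hβ : 0 < β := gaugeAt_pos hs hb hp (sub_ne_zero.2 hxp.symm)
  refine ⟨p + α⁻¹ • (x - p), p + β⁻¹ • (p - x),
    (add_smul_mem_frontier_iff_s15 hs hc hp (inv_pos.2 hα)).2 (inv_mul_cancel₀ hα.ne'),
    (add_smul_mem_frontier_iff_s15 hs hc hp (inv_pos.2 hβ)).2 (inv_mul_cancel₀ hβ.ne'),
    ⟨α, 1 - α, hα, by linarith, by ring, ?_⟩,
    ⟨1 / (1 + β), β / (1 + β), by positivity, by positivity, by field_simp, ?_⟩⟩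
  · rw [smul_add, smul_smul, mul_inv_cancel₀ hα.ne', one_smul]
    module
  · match_scalars <;> field_simp <;> ring

end GaugeAt

section HilbertDist

variable {Ω : Set V2} {x p : V2}

theorem hilbertDist_self_s15 (hΩo : IsOpen Ω) (hp : p ∈ Ω) : hilbertDist Ω p p = 0 := by
  rw [hilbertDist, dif_neg]
  rintro ⟨y, -, hy, -, hpy, -⟩
  rw [right_mem_openSegment_iff.1 hpy] at hy
  exact hy.2 (hΩo.interior_eq.symm ▸ hp)

theorem hilbertDist_eq_log (hΩo : IsOpen Ω) (hΩb : Bornology.IsBounded Ω) (hΩc : Convex ℝ Ω)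
    (hx : x ∈ Ω) (hp : p ∈ Ω) :
    hilbertDist Ω x p =
      1 / 2 * Real.log ((1 + gaugeAt Ω p (p - x)) / (1 - gaugeAt Ω p (x - p))) := by
  rcases eq_or_ne x p with rfl | hxp
  · simp [hilbertDist_self_s15 hΩo hx, gaugeAt]
  set α := gaugeAt Ω p (x - p)
  set β := gaugeAt Ω p (p - x)
  have hα₁ : α < 1 := gaugeAt_lt_one hΩo (by rwa [add_sub_cancel])
  have hchord := exists_chord_endpoints hΩo hΩb hΩc hx hp hxp
  rw [hilbertDist, dif_pos hchord]
  obtain ⟨hX, hY, hxX, hpY⟩ := hchord.choose_spec.choose_spec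
  set X := hchord.choose
  set Y := hchord.choose_spec.choose
  -- whichever endpoints `choose` picks, the frontier fixes their parameters along the line `x p`
  obtain ⟨c, hc, hXc⟩ :=
    exists_pos_sub_eq_smul_of_mem_openSegment (openSegment_symm ℝ X p ▸ hxX)
  obtain ⟨d, hd, hYd⟩ := exists_pos_sub_eq_smul_of_mem_openSegment hpY
  have hXeq : X = p + (1 + c) • (x - p) := by
    rw [add_smul, one_smul, ← hXc]; abel
  have hYeq : Y = p + d • (p - x) := by rw [← hYd]; abel
  have hcα : (1 + c) * α = 1 :=
    (add_smul_mem_frontier_iff_s15 hΩo hΩc hp (by positivity)).1 (hXeq ▸ hX)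
  have hdβ : d * β = 1 := (add_smul_mem_frontier_iff_s15 hΩo hΩc hp hd).1 (hYeq ▸ hY)
  have hdist : ∀ (a b : ℝ) (z z' : V2), z = p + a • (x - p) → z' = p + b • (x - p) →
      dist z z' = |a - b| * ‖x - p‖ := by
    rintro a b _ _ rfl rfl
    exact dist_add_smul_add_smul _ _ _ _
  have hY' : Y = p + (-d) • (x - p) := by rw [hYeq]; module
  rw [hdist _ 0 X p hXeq (by module), hdist _ 1 Y x hY' (by module),
    hdist _ 1 X x hXeq (by module), hdist _ 0 Y p hY' (by module)]
  have hw : 0 < ‖x - p‖ := norm_pos_iff.2 (sub_ne_zero.2 hxp)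
  rw [abs_of_pos (by linarith), abs_of_neg (by linarith), abs_of_pos (by linarith),
    abs_of_neg (by linarith)]
  congr 2
  field_simp
  rw [div_eq_div_iff (mul_ne_zero (by linarith) (by linarith)) (by linarith)]
  linear_combination (d + 1) * hcα + c * hdβ

theorem hilbertDist_pos (hΩo : IsOpen Ω) (hΩb : Bornology.IsBounded Ω) (hΩc : Convex ℝ Ω)
    (hx : x ∈ Ω) (hp : p ∈ Ω) (hxp : x ≠ p) : 0 < hilbertDist Ω x p := by
  have hα : 0 < gaugeAt Ω p (x - p) := gaugeAt_pos hΩo hΩb hp (sub_ne_zero.2 hxp)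
  have hα₁ : gaugeAt Ω p (x - p) < 1 := gaugeAt_lt_one hΩo (by rwa [add_sub_cancel])
  have hβ : 0 ≤ gaugeAt Ω p (p - x) := gauge_nonneg _
  rw [hilbertDist_eq_log hΩo hΩb hΩc hx hp]
  exact mul_pos one_half_pos (Real.log_pos ((one_lt_div (by linarith)).2 (by linarith)))

theorem continuousOn_hilbertDist_left (hΩo : IsOpen Ω) (hΩb : Bornology.IsBounded Ω)
    (hΩc : Convex ℝ Ω) (hp : p ∈ Ω) : ContinuousOn (fun x ↦ hilbertDist Ω x p) Ω := by
  have hg := continuous_gaugeAt hΩo hΩc hp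
  have hden : ∀ x ∈ Ω, 1 - gaugeAt Ω p (x - p) ≠ 0 := fun x hx ↦
    (sub_pos.2 (gaugeAt_lt_one hΩo (by rwa [add_sub_cancel]))).ne'
  refine ContinuousOn.congr ?_ fun x hx ↦ hilbertDist_eq_log hΩo hΩb hΩc hx hp
  refine continuousOn_const.mul (ContinuousOn.log ?_ fun x hx ↦ div_ne_zero ?_ (hden x hx))
  · exact (continuousOn_const.add (hg.comp (continuous_const.sub continuous_id)).continuousOn).div
      (continuousOn_const.sub (hg.comp (continuous_id.sub continuous_const)).continuousOn) hden
  · exact (add_pos_of_pos_of_nonneg one_pos (gauge_nonneg _)).ne'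

end HilbertDist

/-- The Hilbert bisector of two distinct sites is closed in `Ω` and separates the sites. -/
theorem hilbert_bisector_closed_and_separates (Ω : Set V2) (hΩo : IsOpen Ω)
    (hΩb : Bornology.IsBounded Ω) (hΩc : Convex ℝ Ω)
    (p q : V2) (hp : p ∈ Ω) (hq : q ∈ Ω) (hpq : p ≠ q) :
    IsClosed {x : Ω | hilbertDist Ω x p = hilbertDist Ω x q} ∧
    connectedComponentIn (Ω \ {x | hilbertDist Ω x p = hilbertDist Ω x q}) p ≠
      connectedComponentIn (Ω \ {x | hilbertDist Ω x p = hilbertDist Ω x q}) q := by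
  have hcont : ∀ z ∈ Ω, ContinuousOn (fun x ↦ hilbertDist Ω x z) Ω :=
    fun z hz ↦ continuousOn_hilbertDist_left hΩo hΩb hΩc hz
  refine ⟨isClosed_eq (hcont p hp).domRestrict (hcont q hq).domRestrict,
    connectedComponentIn_diff_setOf_eq_ne (hcont p hp) (hcont q hq) hp hq ?_ ?_⟩
  · rw [hilbertDist_self_s15 hΩo hp]
    exact hilbertDist_pos hΩo hΩb hΩc hp hq hpq
  · rw [hilbertDist_self_s15 hΩo hq]
    exact hilbertDist_pos hΩo hΩb hΩc hq hp hpq.symm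
end
end
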